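/- arXiv:2411.09490 — 8 statements merged into one kernel-verified Lean document; each statement's English description precedes it below -/
import Mathlib

section
/- Let t, s, k, n be integers with t ≥ 0, s ≥ 0, k ≥ s+1 and n ≥ 2k+t. Let ℱ ⊆ C([n], k+t) and 𝒢 ⊆ C([n], k) be cross-intersecting families. If ℱ is (t+1)-intersecting and C([k+t+s], k+t) ⊆ ℱ, then |ℱ| + |𝒢| ≤ C(k+t+s, k+t) + C(n, k) − Σ_{i=0}^{s} C(k+t+s, i)·C(n−k−t−s, k−i). -/
/-!
Write `l = k + t + s` and call `|H ∩ [l]|` the trace of `H`. A member of `𝒢` meets every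
`(k + t)`-subset of `[l]`, so its trace exceeds `s`: `𝒢` lies among the `k`-sets of trace `> s`
meeting every member of `ℱ`, whose complement among all `k`-sets of trace `> s` is the family
`𝒳(ℱ)` of those disjoint from some member of `ℱ`. So it suffices that
`|ℱ \ C([l], k + t)| ≤ |𝒳(ℱ)|`.

Compressions `j ↦ i` with `i < j` keep `|ℱ|` and the hypotheses on `ℱ`, and, preserving
cross-intersection, they do not increase `|𝒳(ℱ)|`; so `ℱ` may be assumed shifted. For shifted
families the inequality is proved by induction on the ground set `[m]`: members avoiding `m` are
treated in `[m - 1]`, members containing `m` through the link of `m`, which is again shifted and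
intersecting; when `m = 2K + T`, complementation gives an injection.
-/

open Finset UV
open scoped FinsetFamily

namespace CrossIntersecting

def traceCard (l : ℕ) (A : Finset ℕ) : ℕ := #(A ∩ Icc 1 l)

section traceCard

variable {l x : ℕ} {A B : Finset ℕ}

lemma traceCard_le_card (l : ℕ) (A : Finset ℕ) : traceCard l A ≤ #A :=
  card_le_card inter_subset_left

lemma traceCard_insert (hx : x ∉ A) :
    traceCard l (insert x A) = traceCard l A + traceCard l {x} := by
  rw [traceCard, traceCard, traceCard, insert_eq, union_inter_distrib_right, add_comm,
    card_union_of_disjoint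
      (disjoint_singleton_left.2 hx |>.mono inter_subset_left inter_subset_left)]

lemma traceCard_erase_add (hx : x ∈ A) :
    traceCard l (A.erase x) + traceCard l {x} = traceCard l A := by
  rw [← traceCard_insert (notMem_erase x A), insert_erase hx]

lemma traceCard_sdiff (h : A ⊆ B) : traceCard l (B \ A) = traceCard l B - traceCard l A := by
  rw [traceCard, traceCard, traceCard, ← card_sdiff_of_subset (inter_subset_inter_right h)]
  exact congrArg card (inf_sdiff_distrib_right _ _ _)

lemma traceCard_Icc (l m : ℕ) : traceCard l (Icc 1 m) = min m l := by
  have : Icc 1 m ∩ Icc 1 l = Icc 1 (min m l) := by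
    ext; simp only [mem_inter, mem_Icc, le_inf_iff]; omega
  rw [traceCard, this, Nat.card_Icc, Nat.add_sub_cancel]

lemma traceCard_lt_card (h : ¬A ⊆ Icc 1 l) : traceCard l A < #A :=
  card_lt_card <| Finset.ssubset_iff_subset_ne.2
    ⟨inter_subset_left, fun he => h (he ▸ inter_subset_right)⟩

lemma lt_traceCard_add {r t : ℕ} (hr : r ≤ l)
    (h : ∀ B ⊆ Icc 1 l, #B = r → t < #(A ∩ B)) : l + t < traceCard l A + r := by
  by_contra! hle
  -- Discard `t` points `R` of `A ∩ [l]`; an `r`-subset of `[l] \ R` meets `A` in `≤ t` points.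
  have htr : #(A ∩ Icc 1 l) = traceCard l A := rfl
  obtain ⟨R, hRA, hR⟩ := exists_subset_card_eq (s := A ∩ Icc 1 l) (n := traceCard l A - t)
    (by rw [traceCard]; omega)
  have hRl : R ⊆ Icc 1 l := hRA.trans inter_subset_right
  obtain ⟨B, hBR, hB⟩ := exists_subset_card_eq (s := Icc 1 l \ R) (n := r)
    (by rw [card_sdiff_of_subset hRl, Nat.card_Icc, hR]; omega)
  have hAB : A ∩ B ⊆ (A ∩ Icc 1 l) \ R := fun x hx => by
    have := hBR (mem_inter.1 hx).2
    simp only [mem_sdiff, mem_inter] at this hx ⊢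
    tauto
  have := (card_le_card hAB).trans_lt' (h B (hBR.trans sdiff_subset) hB)
  rw [card_sdiff_of_subset hRA, hR] at this
  omega

end traceCard

def IsShifted (𝒜 : Finset (Finset ℕ)) : Prop :=
  ∀ ⦃i j A⦄, 1 ≤ i → i < j → A ∈ 𝒜 → j ∈ A → i ∉ A → insert i (A.erase j) ∈ 𝒜

section IsShifted

variable {m r : ℕ} {𝒜 : Finset (Finset ℕ)}

lemma nonMemberSubfamily_subset_powersetCard (h𝒜 : 𝒜 ⊆ powersetCard r (Icc 1 (m + 1))) :
    𝒜.nonMemberSubfamily (m + 1) ⊆ powersetCard r (Icc 1 m) := by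
  intro A hA
  obtain ⟨hA, hmA⟩ := mem_nonMemberSubfamily.1 hA
  obtain ⟨hAm, hAr⟩ := mem_powersetCard.1 (h𝒜 hA)
  refine mem_powersetCard.2 ⟨fun x hx => ?_, hAr⟩
  have := mem_Icc.1 (hAm hx)
  have : x ≠ m + 1 := by rintro rfl; exact hmA hx
  exact mem_Icc.2 (by omega)

lemma memberSubfamily_subset_powersetCard (h𝒜 : 𝒜 ⊆ powersetCard (r + 1) (Icc 1 (m + 1))) :
    𝒜.memberSubfamily (m + 1) ⊆ powersetCard r (Icc 1 m) := by
  intro A hA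
  obtain ⟨hA, hmA⟩ := mem_memberSubfamily.1 hA
  obtain ⟨hAm, hAr⟩ := mem_powersetCard.1 (h𝒜 hA)
  rw [card_insert_of_notMem hmA, Nat.add_right_cancel_iff] at hAr
  refine mem_powersetCard.2 ⟨fun x hx => ?_, hAr⟩
  have := mem_Icc.1 (hAm (mem_insert_of_mem hx))
  have : x ≠ m + 1 := by rintro rfl; exact hmA hx
  exact mem_Icc.2 (by omega)

lemma IsShifted.nonMemberSubfamily (h : IsShifted 𝒜) (h𝒜 : 𝒜 ⊆ powersetCard r (Icc 1 (m + 1))) :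
    IsShifted (𝒜.nonMemberSubfamily (m + 1)) := by
  intro i j A hi hij hA hjA hiA
  have hjm := mem_Icc.1 (mem_powersetCard.1 (nonMemberSubfamily_subset_powersetCard h𝒜 hA) |>.1 hjA)
  obtain ⟨hA, hmA⟩ := mem_nonMemberSubfamily.1 hA
  refine mem_nonMemberSubfamily.2 ⟨h hi hij hA hjA hiA, ?_⟩
  simp only [mem_insert, mem_erase, not_or, not_and]
  exact ⟨by omega, fun _ => hmA⟩

lemma IsShifted.memberSubfamily (h : IsShifted 𝒜)
    (h𝒜 : 𝒜 ⊆ powersetCard (r + 1) (Icc 1 (m + 1))) :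
    IsShifted (𝒜.memberSubfamily (m + 1)) := by
  intro i j A hi hij hA hjA hiA
  have hjm := mem_Icc.1 (mem_powersetCard.1 (memberSubfamily_subset_powersetCard h𝒜 hA) |>.1 hjA)
  obtain ⟨hA, hmA⟩ := mem_memberSubfamily.1 hA
  have hshift := h hi hij hA (mem_insert_of_mem hjA)
    (by simp only [mem_insert, hiA, or_false]; omega)
  rw [erase_insert_of_ne (by omega), insert_comm] at hshift
  refine mem_memberSubfamily.2 ⟨hshift, ?_⟩
  simp only [mem_insert, mem_erase, not_or, not_and]
  exact ⟨by omega, fun _ => hmA⟩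

/-- This is the shift of `insert (m + 1) A` replacing `m + 1` by `x`. -/
lemma IsShifted.insert_mem_of_mem_memberSubfamily (h : IsShifted 𝒜) {A : Finset ℕ} {x : ℕ}
    (hA : A ∈ 𝒜.memberSubfamily (m + 1)) (hx : x ∈ Icc 1 m) (hxA : x ∉ A) : insert x A ∈ 𝒜 := by
  obtain ⟨hA, hmA⟩ := mem_memberSubfamily.1 hA
  have hx := mem_Icc.1 hx
  have := h hx.1 (by omega) hA (mem_insert_self _ _)
    (by simp only [mem_insert, hxA, or_false]; omega)
  rwa [erase_insert hmA] at this

/-- If two links met in fewer than `T` points, moving `m + 1` in one of them to a point outside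
both would produce two members of `𝒜` meeting in fewer than `T` points. -/
lemma IsShifted.le_card_inter_of_mem_memberSubfamily {T : ℕ} (h : IsShifted 𝒜)
    (h𝒜 : 𝒜 ⊆ powersetCard (r + 1) (Icc 1 (m + 1))) (hm : 2 * (r + 1) ≤ m + T)
    (hint : ∀ A ∈ 𝒜, ∀ B ∈ 𝒜, T ≤ #(A ∩ B)) {A B : Finset ℕ}
    (hA : A ∈ 𝒜.memberSubfamily (m + 1)) (hB : B ∈ 𝒜.memberSubfamily (m + 1)) :
    T ≤ #(A ∩ B) := by
  by_contra! hlt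
  have hAr := (mem_powersetCard.1 (memberSubfamily_subset_powersetCard h𝒜 hA)).2
  have hBr := (mem_powersetCard.1 (memberSubfamily_subset_powersetCard h𝒜 hB)).2
  obtain ⟨hA', hmA⟩ := mem_memberSubfamily.1 hA
  obtain ⟨hB', hmB⟩ := mem_memberSubfamily.1 hB
  have hAB := hint _ hA' _ hB'
  rw [← insert_inter_distrib, card_insert_of_notMem (by simp [hmA])] at hAB
  have hunion := card_union_add_card_inter A B
  obtain ⟨x, hx, hxAB⟩ :=
    exists_mem_notMem_of_card_lt_card (s := A ∪ B) (t := Icc 1 m)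
      (by simp only [Nat.card_Icc]; omega)
  rw [mem_union, not_or] at hxAB
  have hshift := hint _ (h.insert_mem_of_mem_memberSubfamily hA hx hxAB.1) _ hB'
  have hxm : x ≠ m + 1 := by have := mem_Icc.1 hx; omega
  have : insert x A ∩ insert (m + 1) B = A ∩ B := by
    ext y
    simp only [mem_inter, mem_insert]
    constructor
    · rintro ⟨rfl | hyA, rfl | hyB⟩ <;> tauto
    · tauto
  rw [this] at hshift
  omega

end IsShifted

section Injection

variable (l : ℕ)

def avoidingSets (m K S : ℕ) (𝒜 : Finset (Finset ℕ)) : Finset (Finset ℕ) :=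
  {H ∈ powersetCard K (Icc 1 m) | S ≤ traceCard l H ∧ ∃ A ∈ 𝒜, Disjoint A H}

variable {l} {T m K S : ℕ} {𝒜 : Finset (Finset ℕ)}

lemma card_filter_le_card_avoidingSets_zero (h𝒜 : 𝒜 ⊆ powersetCard T (Icc 1 m))
    (hint : ∀ A ∈ 𝒜, ∀ B ∈ 𝒜, T ≤ #(A ∩ B)) (htr : 0 < S → ∀ A ∈ 𝒜, T + S ≤ traceCard l A) :
    #{A ∈ 𝒜 | traceCard l A ≤ l - S} ≤ #(avoidingSets l m 0 S 𝒜) := by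
  obtain he | ⟨A, hA⟩ := ({A ∈ 𝒜 | traceCard l A ≤ l - S}).eq_empty_or_nonempty
  · simp [he]
  have hA := (mem_filter.1 hA).1
  have hS : S = 0 := by
    by_contra hS
    have := htr (by omega) A hA
    have := traceCard_le_card l A
    have := (mem_powersetCard.1 (h𝒜 hA)).2
    omega
  have hcard (B) (hB : B ∈ 𝒜) : #B = T := (mem_powersetCard.1 (h𝒜 hB)).2
  calc #{A ∈ 𝒜 | traceCard l A ≤ l - S} ≤ #𝒜 := card_filter_le _ _
    _ ≤ 1 := card_le_one.2 fun B hB C hC => by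
      have hBC : B ∩ C = B :=
        eq_of_subset_of_card_le inter_subset_left ((hcard B hB).trans_le (hint B hB C hC))
      exact eq_of_subset_of_card_le (inter_eq_left.1 hBC) (by rw [hcard B hB, hcard C hC])
    _ ≤ #(avoidingSets l m 0 S 𝒜) :=
      card_pos.2 ⟨∅, mem_filter.2 ⟨by simp, by simp [hS], A, hA, disjoint_empty_right _⟩⟩

/-- Complementation in `[2K + T]` maps the left side injectively into the right side. -/
lemma card_filter_le_card_avoidingSets_of_eq (h𝒜 : 𝒜 ⊆ powersetCard (K + T) (Icc 1 (2 * K + T)))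
    (htr : 0 < S → ∀ A ∈ 𝒜, T + S ≤ traceCard l A) :
    #{A ∈ 𝒜 | traceCard l A ≤ l - S} ≤ #(avoidingSets l (2 * K + T) K S 𝒜) := by
  have hsub (A) (hA : A ∈ 𝒜) : A ⊆ Icc 1 (2 * K + T) := (mem_powersetCard.1 (h𝒜 hA)).1
  refine card_le_card_of_injOn (Icc 1 (2 * K + T) \ ·) (fun A hA => ?_) fun A hA B hB hAB => ?_
  · obtain ⟨hA, hAl⟩ := mem_filter.1 hA
    have hAc := (mem_powersetCard.1 (h𝒜 hA)).2
    refine mem_filter.2 ⟨mem_powersetCard.2 ⟨sdiff_subset, ?_⟩, ?_, A, hA, disjoint_sdiff⟩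
    · rw [card_sdiff_of_subset (hsub A hA), Nat.card_Icc, hAc]
      omega
    · rw [traceCard_sdiff (hsub A hA), traceCard_Icc]
      have := traceCard_le_card l A
      obtain hS | hS := S.eq_zero_or_pos
      · omega
      · have := htr hS A hA
        omega
  · have hA := (mem_filter.1 hA).1
    have hB := (mem_filter.1 hB).1
    rw [← Finset.sdiff_sdiff_eq_self (hsub A hA), ← Finset.sdiff_sdiff_eq_self (hsub B hB)]
    exact congrArg _ hAB

lemma avoidingSets_nonMemberSubfamily_subset :
    avoidingSets l m K S (𝒜.nonMemberSubfamily (m + 1)) ⊆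
      (avoidingSets l (m + 1) K S 𝒜).nonMemberSubfamily (m + 1) := by
  intro H hH
  obtain ⟨hHm, hHl, B, hB, hBH⟩ := mem_filter.1 hH
  obtain ⟨hHm, hHK⟩ := mem_powersetCard.1 hHm
  refine mem_nonMemberSubfamily.2 ⟨mem_filter.2 ⟨mem_powersetCard.2
    ⟨hHm.trans (Icc_subset_Icc_right (by omega)), hHK⟩, hHl, B,
    (mem_nonMemberSubfamily.1 hB).1, hBH⟩, fun h => ?_⟩
  have := mem_Icc.1 (hHm h)
  omega

/-- Given `B` in the link disjoint from `H`, a shift of `insert (m + 1) B` moving `m + 1` to a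
point outside `B ∪ H` is a member of `𝒜` disjoint from `insert (m + 1) H`. -/
lemma avoidingSets_memberSubfamily_subset (h𝒜 : 𝒜 ⊆ powersetCard (K + T + 1) (Icc 1 (m + 1)))
    (hsh : IsShifted 𝒜) (hm : 2 * (K + 1) + T ≤ m) :
    avoidingSets l m K (S - traceCard l {m + 1}) (𝒜.memberSubfamily (m + 1)) ⊆
      (avoidingSets l (m + 1) (K + 1) S 𝒜).memberSubfamily (m + 1) := by
  intro H hH
  obtain ⟨hHm, hHl, B, hB, hBH⟩ := mem_filter.1 hH
  obtain ⟨hHm, hHK⟩ := mem_powersetCard.1 hHm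
  have hBK := (mem_powersetCard.1 (memberSubfamily_subset_powersetCard h𝒜 hB)).2
  have hmH : m + 1 ∉ H := fun h => by have := mem_Icc.1 (hHm h); omega
  obtain ⟨x, hx, hxBH⟩ := exists_mem_notMem_of_card_lt_card (s := B ∪ H) (t := Icc 1 m)
    (by have := card_union_le B H; simp only [Nat.card_Icc]; omega)
  rw [mem_union, not_or] at hxBH
  have hxm : x ≠ m + 1 := by have := mem_Icc.1 hx; omega
  refine mem_memberSubfamily.2 ⟨mem_filter.2 ⟨mem_powersetCard.2 ⟨?_, ?_⟩, ?_,
    insert x B, hsh.insert_mem_of_mem_memberSubfamily hB hx hxBH.1, ?_⟩, hmH⟩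
  · exact insert_subset (by simp) (hHm.trans (Icc_subset_Icc_right (by omega)))
  · rw [card_insert_of_notMem hmH, hHK]
  · rw [traceCard_insert hmH]
    omega
  · simp only [disjoint_insert_left, disjoint_insert_right, mem_insert, not_or]
    exact ⟨⟨hxm.symm, (mem_memberSubfamily.1 hB).2⟩, hxBH.2, hBH⟩

/-- Both sides split according to whether their sets contain `m + 1`. -/
lemma card_filter_le_card_avoidingSets_succ
    (h𝒜 : 𝒜 ⊆ powersetCard (K + T + 1) (Icc 1 (m + 1))) (hsh : IsShifted 𝒜)
    (hm : 2 * (K + 1) + T ≤ m)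
    (hnon : #{A ∈ 𝒜.nonMemberSubfamily (m + 1) | traceCard l A ≤ l - S} ≤
      #(avoidingSets l m (K + 1) S (𝒜.nonMemberSubfamily (m + 1))))
    (hmem : #{A ∈ 𝒜.memberSubfamily (m + 1) | traceCard l A ≤ l - (S - traceCard l {m + 1})} ≤
      #(avoidingSets l m K (S - traceCard l {m + 1}) (𝒜.memberSubfamily (m + 1)))) :
    #{A ∈ 𝒜 | traceCard l A ≤ l - S} ≤ #(avoidingSets l (m + 1) (K + 1) S 𝒜) := by
  rw [← card_memberSubfamily_add_card_nonMemberSubfamily (m + 1),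
    ← card_memberSubfamily_add_card_nonMemberSubfamily (m + 1) (avoidingSets _ _ _ _ _)]
  gcongr ?_ + ?_
  · refine le_trans (card_le_card fun A hA => ?_)
      (hmem.trans (card_le_card (avoidingSets_memberSubfamily_subset h𝒜 hsh hm)))
    simp only [mem_memberSubfamily, mem_filter] at hA ⊢
    have := traceCard_insert (l := l) hA.2
    exact ⟨⟨hA.1.1, hA.2⟩, by omega⟩
  · refine le_trans (card_le_card fun A hA => ?_)
      (hnon.trans (card_le_card avoidingSets_nonMemberSubfamily_subset))
    simp only [mem_nonMemberSubfamily, mem_filter] at hA ⊢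
    exact ⟨⟨hA.1.1, hA.2⟩, hA.1.2⟩

theorem card_filter_le_card_avoidingSets (h𝒜 : 𝒜 ⊆ powersetCard (K + T) (Icc 1 m))
    (hsh : IsShifted 𝒜) (hint : ∀ A ∈ 𝒜, ∀ B ∈ 𝒜, T ≤ #(A ∩ B))
    (htr : 0 < S → ∀ A ∈ 𝒜, T + S ≤ traceCard l A) (hm : 2 * K + T ≤ m) :
    #{A ∈ 𝒜 | traceCard l A ≤ l - S} ≤ #(avoidingSets l m K S 𝒜) := by
  induction m generalizing K S 𝒜 with
  | zero =>
    obtain rfl : K = 0 := by omega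
    exact card_filter_le_card_avoidingSets_zero (by simpa using h𝒜) hint htr
  | succ m ih =>
    rcases K with _ | K
    · exact card_filter_le_card_avoidingSets_zero (by simpa using h𝒜) hint htr
    obtain hm | hm := hm.eq_or_lt
    · rw [← hm] at h𝒜 ⊢
      exact card_filter_le_card_avoidingSets_of_eq h𝒜 htr
    have h𝒜' : 𝒜 ⊆ powersetCard (K + T + 1) (Icc 1 (m + 1)) := by
      rwa [add_right_comm] at h𝒜
    refine card_filter_le_card_avoidingSets_succ h𝒜' hsh (by omega) ?_ ?_
    · exact ih (nonMemberSubfamily_subset_powersetCard h𝒜) (hsh.nonMemberSubfamily h𝒜)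
        (fun A hA B hB => hint A (mem_nonMemberSubfamily.1 hA).1 B (mem_nonMemberSubfamily.1 hB).1)
        (fun hS A hA => htr hS A (mem_nonMemberSubfamily.1 hA).1) (by omega)
    · refine ih (memberSubfamily_subset_powersetCard h𝒜') (hsh.memberSubfamily h𝒜')
        (fun A hA B hB => hsh.le_card_inter_of_mem_memberSubfamily h𝒜' (by omega) hint hA hB)
        (fun hS A hA => ?_) (by omega)
      obtain ⟨hA, hmA⟩ := mem_memberSubfamily.1 hA
      have := htr (by omega) _ hA
      have := traceCard_insert (l := l) hmA
      omega

end Injection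

section Compression

section General

variable {α : Type*} [DecidableEq α] {u v : Finset α} {𝒜 ℬ : Finset (Finset α)}

lemma compression_subset (h : 𝒜 ⊆ ℬ) (hℬ : ∀ A ∈ 𝒜, compress u v A ∈ ℬ) : 𝓒 u v 𝒜 ⊆ ℬ := by
  intro A hA
  obtain ⟨hA, -⟩ | ⟨-, B, hB, rfl⟩ := mem_compression.1 hA
  exacts [h hA, hℬ B hB]

lemma subset_compression (h : 𝒜 ⊆ ℬ) (h𝒜 : ∀ A ∈ 𝒜, compress u v A ∈ 𝒜) : 𝒜 ⊆ 𝓒 u v ℬ :=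
  fun A hA => mem_compression.2 (Or.inl ⟨h hA, h (h𝒜 A hA)⟩)

end General

variable {i j l n r : ℕ} {A B : Finset ℕ} {𝒜 ℬ : Finset (Finset ℕ)}

lemma compress_singleton (hij : i ≠ j) (A : Finset ℕ) :
    compress {i} {j} A = if j ∈ A ∧ i ∉ A then insert i (A.erase j) else A := by
  simp only [compress, disjoint_singleton_left, singleton_subset_iff, and_comm,
    sup_eq_union, union_singleton, sdiff_singleton_eq_erase, erase_insert_of_ne hij]

lemma compress_singleton_eq_insert_erase (hij : i ≠ j) (hjA : j ∈ A) (hiA : i ∉ A) :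
    compress {i} {j} A = insert i (A.erase j) := by
  rw [compress_singleton hij, if_pos ⟨hjA, hiA⟩]

lemma compress_singleton_eq_self (hij : i ≠ j) (hA : ¬(j ∈ A ∧ i ∉ A)) :
    compress {i} {j} A = A := by
  rw [compress_singleton hij, if_neg hA]

lemma compress_mem_powersetCard (hi : 1 ≤ i) (hij : i < j)
    (hA : A ∈ powersetCard r (Icc 1 n)) : compress {i} {j} A ∈ powersetCard r (Icc 1 n) := by
  obtain ⟨hAn, hAr⟩ := mem_powersetCard.1 hA
  refine mem_powersetCard.2 ⟨?_, (card_compress (by simp) A).trans hAr⟩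
  by_cases hmove : j ∈ A ∧ i ∉ A
  · rw [compress_singleton_eq_insert_erase hij.ne hmove.1 hmove.2]
    have := mem_Icc.1 (hAn hmove.1)
    exact insert_subset (mem_Icc.2 (by omega)) ((erase_subset _ _).trans hAn)
  · rwa [compress_singleton_eq_self hij.ne hmove]

lemma traceCard_singleton_le (hi : 1 ≤ i) (hij : i ≤ j) : traceCard l {j} ≤ traceCard l {i} := by
  simp only [traceCard, singleton_inter, mem_Icc]
  split_ifs <;> simp only [card_singleton, card_empty] <;> omega

lemma traceCard_le_traceCard_compress (hi : 1 ≤ i) (hij : i < j) :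
    traceCard l A ≤ traceCard l (compress {i} {j} A) := by
  by_cases hmove : j ∈ A ∧ i ∉ A
  · rw [compress_singleton_eq_insert_erase hij.ne hmove.1 hmove.2,
      traceCard_insert fun h => hmove.2 (mem_of_mem_erase h)]
    have := traceCard_erase_add (l := l) hmove.1
    have := traceCard_singleton_le (l := l) hi hij.le
    omega
  · rw [compress_singleton_eq_self hij.ne hmove]

lemma card_inter_le_card_compress_inter (hij : i ≠ j) (hB : ¬(j ∈ B ∧ i ∉ B)) :
    #(A ∩ B) ≤ #(compress {i} {j} A ∩ B) := by
  by_cases hmove : j ∈ A ∧ i ∉ A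
  · rw [compress_singleton_eq_insert_erase hij hmove.1 hmove.2]
    by_cases hiB : i ∈ B
    · rw [insert_inter_of_mem hiB, erase_inter,
        card_insert_of_notMem fun h => hmove.2 (mem_inter.1 (mem_of_mem_erase h)).1]
      have := pred_card_le_card_erase (s := A ∩ B) (a := j)
      omega
    · rw [insert_inter_of_notMem hiB, erase_inter,
        erase_eq_of_notMem fun h => hB ⟨(mem_inter.1 h).2, hiB⟩]
  · rw [compress_singleton_eq_self hij hmove]

lemma card_inter_le_card_compress_inter_compress (hij : i ≠ j) :
    #(A ∩ B) ≤ #(compress {i} {j} A ∩ compress {i} {j} B) := by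
  by_cases hB : j ∈ B ∧ i ∉ B
  · by_cases hA : j ∈ A ∧ i ∉ A
    · rw [compress_singleton_eq_insert_erase hij hA.1 hA.2,
        compress_singleton_eq_insert_erase hij hB.1 hB.2,
        ← insert_inter_distrib, erase_inter, inter_erase, erase_idem,
        card_insert_of_notMem fun h => hA.2 (mem_inter.1 (mem_of_mem_erase h)).1]
      have := pred_card_le_card_erase (s := A ∩ B) (a := j)
      omega
    · rw [inter_comm, inter_comm (compress _ _ A), compress_singleton_eq_self hij hA]
      exact card_inter_le_card_compress_inter hij hA
  · rw [compress_singleton_eq_self hij hB]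
    exact card_inter_le_card_compress_inter hij hB

lemma le_card_inter_compress {r : ℕ} (hij : i ≠ j) (h : ∀ A ∈ 𝒜, ∀ B ∈ ℬ, r ≤ #(A ∩ B))
    (hA : A ∈ 𝒜) (hcA : compress {i} {j} A ∈ 𝒜) (hB : B ∈ ℬ) :
    r ≤ #(A ∩ compress {i} {j} B) := by
  by_cases hmoveA : j ∈ A ∧ i ∉ A
  · by_cases hmoveB : j ∈ B ∧ i ∉ B
    · have : A ∩ compress {i} {j} B = compress {i} {j} A ∩ B := by
        rw [compress_singleton_eq_insert_erase hij hmoveA.1 hmoveA.2,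
          compress_singleton_eq_insert_erase hij hmoveB.1 hmoveB.2, inter_insert_of_notMem hmoveA.2,
          insert_inter_of_notMem hmoveB.2, inter_erase, erase_inter]
      rw [this]
      exact h _ hcA B hB
    · rw [compress_singleton_eq_self hij hmoveB]
      exact h A hA B hB
  · calc r ≤ #(A ∩ B) := h A hA B hB
      _ ≤ #(compress {i} {j} A ∩ compress {i} {j} B) :=
        card_inter_le_card_compress_inter_compress hij
      _ = #(A ∩ compress {i} {j} B) := by rw [compress_singleton_eq_self hij hmoveA]

lemma le_card_inter_of_mem_compression {r : ℕ} (hij : i ≠ j)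
    (h : ∀ A ∈ 𝒜, ∀ B ∈ ℬ, r ≤ #(A ∩ B)) (hA : A ∈ 𝓒 {i} {j} 𝒜) (hB : B ∈ 𝓒 {i} {j} ℬ) :
    r ≤ #(A ∩ B) := by
  obtain ⟨hA', hcA⟩ | ⟨-, A, hA', rfl⟩ := mem_compression.1 hA <;>
    obtain ⟨hB', hcB⟩ | ⟨-, B, hB', rfl⟩ := mem_compression.1 hB
  · exact h A hA' B hB'
  · exact le_card_inter_compress hij h hA' hcA hB'
  · rw [inter_comm]
    exact le_card_inter_compress hij (fun B hB A hA => inter_comm A B ▸ h A hA B hB) hB' hcB hA'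
  · exact (h A hA' B hB').trans (card_inter_le_card_compress_inter_compress hij)

def weight (𝒜 : Finset (Finset ℕ)) : ℕ := ∑ A ∈ 𝒜, ∑ a ∈ A, a

lemma weight_compression_lt (hij : i < j) (h : ∃ A ∈ 𝒜, compress {i} {j} A ∉ 𝒜) :
    weight (𝓒 {i} {j} 𝒜) < weight 𝒜 := by
  obtain ⟨A, hA, hcA⟩ := h
  have hmoved (B) (hB : B ∈ {B ∈ 𝒜 | compress {i} {j} B ∉ 𝒜}) :
      ∑ b ∈ compress {i} {j} B, b < ∑ b ∈ B, b := by
    obtain ⟨hB, hcB⟩ := mem_filter.1 hB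
    have hmove : j ∈ B ∧ i ∉ B := by
      by_contra hmove
      rw [compress_singleton_eq_self hij.ne hmove] at hcB
      exact hcB hB
    rw [compress_singleton_eq_insert_erase hij.ne hmove.1 hmove.2,
      sum_insert fun h => hmove.2 (mem_of_mem_erase h), ← sum_erase_add _ _ hmove.1]
    omega
  rw [weight, weight, compression, sum_union compress_disjoint, filter_image,
    sum_image compress_injOn, ← sum_filter_add_sum_filter_not 𝒜 (compress {i} {j} · ∈ 𝒜)]
  exact Nat.add_lt_add_left (sum_lt_sum_of_nonempty ⟨A, mem_filter.2 ⟨hA, hcA⟩⟩ hmoved) _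

lemma exists_compress_notMem_of_not_isShifted (h : ¬IsShifted 𝒜) :
    ∃ i j, 1 ≤ i ∧ i < j ∧ ∃ A ∈ 𝒜, compress {i} {j} A ∉ 𝒜 := by
  simp only [IsShifted, not_forall] at h
  obtain ⟨i, j, A, hi, hij, hA, hjA, hiA, hshift⟩ := h
  exact ⟨i, j, hi, hij, A, hA, by rwa [compress_singleton_eq_insert_erase hij.ne hjA hiA]⟩

/-- The sets meeting every member of `𝒜` form a family cross-intersecting with `𝒜`; compressing
both keeps them cross-intersecting, so there are at least as many such sets for `𝓒 𝒜`. -/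
lemma card_avoidingSets_compression_le {k S : ℕ} (hi : 1 ≤ i) (hij : i < j) :
    #(avoidingSets l n k S (𝓒 {i} {j} 𝒜)) ≤ #(avoidingSets l n k S 𝒜) := by
  set 𝒯 := {H ∈ powersetCard k (Icc 1 n) | S ≤ traceCard l H}
  have havoid (ℬ) : avoidingSets l n k S ℬ ⊆ 𝒯 :=
    fun H hH => mem_filter.2 ⟨(mem_filter.1 hH).1, (mem_filter.1 hH).2.1⟩
  have hcompress (H) (hH : H ∈ 𝒯 \ avoidingSets l n k S 𝒜) : compress {i} {j} H ∈ 𝒯 := by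
    obtain ⟨hHk, hHS⟩ := mem_filter.1 (mem_sdiff.1 hH).1
    exact mem_filter.2 ⟨compress_mem_powersetCard hi hij hHk,
      hHS.trans (traceCard_le_traceCard_compress hi hij)⟩
  have hmeet : ∀ A ∈ 𝒜, ∀ H ∈ 𝒯 \ avoidingSets l n k S 𝒜, 1 ≤ #(A ∩ H) := by
    intro A hA H hH
    obtain ⟨hH𝒯, hHavoid⟩ := mem_sdiff.1 hH
    refine card_pos.2 (not_disjoint_iff_nonempty_inter.1 fun hAH => hHavoid ?_)
    exact mem_filter.2 ⟨(mem_filter.1 hH𝒯).1, (mem_filter.1 hH𝒯).2, A, hA, hAH⟩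
  have hsub : 𝓒 {i} {j} (𝒯 \ avoidingSets l n k S 𝒜) ⊆ 𝒯 \ avoidingSets l n k S (𝓒 {i} {j} 𝒜) := by
    intro H hH
    refine mem_sdiff.2 ⟨compression_subset sdiff_subset hcompress hH, fun hHavoid => ?_⟩
    obtain ⟨-, -, A, hA, hAH⟩ := mem_filter.1 hHavoid
    have := le_card_inter_of_mem_compression hij.ne hmeet hA hH
    rw [disjoint_iff_inter_eq_empty.1 hAH, card_empty] at this
    omega
  have hcard := card_le_card hsub
  rw [card_compression, card_sdiff_of_subset (havoid _), card_sdiff_of_subset (havoid _)] at hcard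
  have := card_le_card (havoid 𝒜)
  have := card_le_card (havoid (𝓒 {i} {j} 𝒜))
  omega

end Compression

section Shifting

variable {k t s n : ℕ}

lemma card_sdiff_le_card_avoidingSets_of_isShifted {𝒜 : Finset (Finset ℕ)} (hn : 2 * k + t ≤ n)
    (h𝒜 : 𝒜 ⊆ powersetCard (k + t) (Icc 1 n)) (hsh : IsShifted 𝒜)
    (hint : ∀ A ∈ 𝒜, ∀ B ∈ 𝒜, t + 1 ≤ #(A ∩ B))
    (hsub : powersetCard (k + t) (Icc 1 (k + t + s)) ⊆ 𝒜) :
    #(𝒜 \ powersetCard (k + t) (Icc 1 (k + t + s))) ≤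
      #(avoidingSets (k + t + s) n k (s + 1) 𝒜) := by
  refine (card_le_card fun A hA => ?_).trans (card_filter_le_card_avoidingSets (T := t) h𝒜 hsh
    (fun A hA B hB => (hint A hA B hB).trans' (Nat.le_succ t)) (fun _ A hA => ?_) hn)
  · obtain ⟨hA, hAC⟩ := mem_sdiff.1 hA
    have hAk := (mem_powersetCard.1 (h𝒜 hA)).2
    have := traceCard_lt_card (l := k + t + s) fun h => hAC (mem_powersetCard.2 ⟨h, hAk⟩)
    exact mem_filter.2 ⟨hA, by omega⟩
  · have := lt_traceCard_add (l := k + t + s) (r := k + t) (by omega)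
      fun B hB hBk => hint A hA B (hsub (mem_powersetCard.2 ⟨hB, hBk⟩))
    omega

theorem card_sdiff_le_card_avoidingSets {𝒜 : Finset (Finset ℕ)} (hn : 2 * k + t ≤ n)
    (h𝒜 : 𝒜 ⊆ powersetCard (k + t) (Icc 1 n)) (hint : ∀ A ∈ 𝒜, ∀ B ∈ 𝒜, t + 1 ≤ #(A ∩ B))
    (hsub : powersetCard (k + t) (Icc 1 (k + t + s)) ⊆ 𝒜) :
    #(𝒜 \ powersetCard (k + t) (Icc 1 (k + t + s))) ≤
      #(avoidingSets (k + t + s) n k (s + 1) 𝒜) := by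
  by_cases hsh : IsShifted 𝒜
  · exact card_sdiff_le_card_avoidingSets_of_isShifted hn h𝒜 hsh hint hsub
  obtain ⟨i, j, hi, hij, hmove⟩ := exists_compress_notMem_of_not_isShifted hsh
  have h𝒜' : 𝓒 {i} {j} 𝒜 ⊆ powersetCard (k + t) (Icc 1 n) :=
    compression_subset h𝒜 fun A hA => compress_mem_powersetCard hi hij (h𝒜 hA)
  have hsub' : powersetCard (k + t) (Icc 1 (k + t + s)) ⊆ 𝓒 {i} {j} 𝒜 :=
    subset_compression hsub fun A hA => compress_mem_powersetCard hi hij hA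
  calc #(𝒜 \ powersetCard (k + t) (Icc 1 (k + t + s)))
      = #(𝓒 {i} {j} 𝒜 \ powersetCard (k + t) (Icc 1 (k + t + s))) := by
        rw [card_sdiff_of_subset hsub, card_sdiff_of_subset hsub', card_compression]
    _ ≤ #(avoidingSets (k + t + s) n k (s + 1) (𝓒 {i} {j} 𝒜)) :=
        card_sdiff_le_card_avoidingSets hn h𝒜'
          (fun A hA B hB => le_card_inter_of_mem_compression hij.ne hint hA hB) hsub'
    _ ≤ #(avoidingSets (k + t + s) n k (s + 1) 𝒜) := card_avoidingSets_compression_le hi hij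
termination_by weight 𝒜
decreasing_by exact weight_compression_lt hij hmove

end Shifting

section Counting

lemma card_filter_card_inter_eq {α : Type*} [DecidableEq α] {X Y : Finset α} (hXY : Disjoint X Y)
    {k i : ℕ} (hik : i ≤ k) :
    #{H ∈ powersetCard k (X ∪ Y) | #(H ∩ X) = i} = (#X).choose i * (#Y).choose (k - i) := by
  rw [← card_powersetCard, ← card_powersetCard, ← card_product]
  have hsplit {H : Finset α} (hH : H ⊆ X ∪ Y) : H ∩ X ∪ H ∩ Y = H := by
    rw [← inter_union_distrib_left, inter_eq_left.2 hH]
  have hX {P Q : Finset α} (hP : P ⊆ X) (hQ : Q ⊆ Y) : (P ∪ Q) ∩ X = P := by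
    rw [union_inter_distrib_right, inter_eq_left.2 hP,
      disjoint_iff_inter_eq_empty.1 (hXY.symm.mono_left hQ), union_empty]
  have hY {P Q : Finset α} (hP : P ⊆ X) (hQ : Q ⊆ Y) : (P ∪ Q) ∩ Y = Q := by
    rw [union_comm, union_inter_distrib_right, inter_eq_left.2 hQ,
      disjoint_iff_inter_eq_empty.1 (hXY.mono_left hP), union_empty]
  refine card_nbij' (fun H => (H ∩ X, H ∩ Y)) (fun p => p.1 ∪ p.2) ?_ ?_ ?_ ?_
  · intro H hH
    simp only [coe_filter, mem_powersetCard, Set.mem_ofPred_eq, coe_product, Set.mem_prod,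
      mem_coe] at hH ⊢
    have := card_union_of_disjoint
      (hXY.mono (inter_subset_right (s₁ := H)) (inter_subset_right (s₁ := H)))
    rw [hsplit hH.1.1, hH.1.2, hH.2] at this
    exact ⟨⟨inter_subset_right, hH.2⟩, inter_subset_right, by omega⟩
  · intro p hp
    simp only [coe_filter, mem_powersetCard, Set.mem_ofPred_eq, coe_product, Set.mem_prod,
      mem_coe] at hp ⊢
    refine ⟨⟨union_subset_union hp.1.1 hp.2.1, ?_⟩, by rw [hX hp.1.1 hp.2.1, hp.1.2]⟩
    rw [card_union_of_disjoint (hXY.mono hp.1.1 hp.2.1), hp.1.2, hp.2.2]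
    omega
  · intro H hH
    exact hsplit (mem_powersetCard.1 (mem_filter.1 hH).1).1
  · intro p hp
    simp only [coe_product, Set.mem_prod, mem_coe, mem_powersetCard] at hp
    exact Prod.ext (hX hp.1.1 hp.2.1) (hY hp.1.1 hp.2.1)

variable {l n k i s : ℕ}

lemma card_filter_traceCard_eq (hln : l ≤ n) (hik : i ≤ k) :
    #{H ∈ powersetCard k (Icc 1 n) | traceCard l H = i} = l.choose i * (n - l).choose (k - i) := by
  have hIcc : Icc 1 n = Icc 1 l ∪ Ioc l n := by
    ext x
    simp only [mem_union, mem_Icc, mem_Ioc]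
    omega
  have hdisj : Disjoint (Icc 1 l) (Ioc l n) :=
    disjoint_left.2 fun x hx hx' => by simp only [mem_Icc, mem_Ioc] at hx hx'; omega
  have := card_filter_card_inter_eq (k := k) hdisj hik
  rw [Nat.card_Icc, Nat.card_Ioc, Nat.add_sub_cancel, ← hIcc] at this
  exact this

lemma card_filter_traceCard_le (hln : l ≤ n) (hsk : s ≤ k) :
    #{H ∈ powersetCard k (Icc 1 n) | traceCard l H ≤ s} =
      ∑ i ∈ range (s + 1), l.choose i * (n - l).choose (k - i) := by
  rw [card_eq_sum_card_fiberwise fun H hH => mem_range.2 (Nat.lt_succ_of_le (mem_filter.1 hH).2)]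
  refine sum_congr rfl fun i hi => ?_
  rw [filter_filter, ← card_filter_traceCard_eq hln (by rw [mem_range] at hi; omega)]
  congr 1
  refine filter_congr fun H _ => ⟨And.right, fun h => ⟨?_, h⟩⟩
  rw [mem_range] at hi
  omega

lemma card_filter_succ_le_traceCard_add_sum (hln : l ≤ n) (hsk : s ≤ k) :
    #{H ∈ powersetCard k (Icc 1 n) | s + 1 ≤ traceCard l H} +
      ∑ i ∈ range (s + 1), l.choose i * (n - l).choose (k - i) = n.choose k := by
  have := card_filter_add_card_filter_not (s := powersetCard k (Icc 1 n))
    (fun H => s + 1 ≤ traceCard l H)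
  simp only [not_le, Nat.lt_succ_iff] at this
  rwa [card_filter_traceCard_le hln hsk, card_powersetCard, Nat.card_Icc, Nat.add_sub_cancel]
    at this

/-- A set meeting every `r`-subset of `[r + s]` has more than `s` points there, and a set meeting
every member of `𝒜` is not in `avoidingSets … 𝒜`. -/
lemma card_add_card_avoidingSets_le {r : ℕ} {𝒜 𝒢 : Finset (Finset ℕ)}
    (h𝒢 : 𝒢 ⊆ powersetCard k (Icc 1 n)) (hcross : ∀ A ∈ 𝒜, ∀ B ∈ 𝒢, (A ∩ B).Nonempty)
    (hsub : powersetCard r (Icc 1 (r + s)) ⊆ 𝒜) :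
    #𝒢 + #(avoidingSets (r + s) n k (s + 1) 𝒜) ≤
      #{H ∈ powersetCard k (Icc 1 n) | s + 1 ≤ traceCard (r + s) H} := by
  rw [← card_union_of_disjoint]
  · refine card_le_card (union_subset (fun B hB => mem_filter.2 ⟨h𝒢 hB, ?_⟩)
      fun H hH => mem_filter.2 ⟨(mem_filter.1 hH).1, (mem_filter.1 hH).2.1⟩)
    have := lt_traceCard_add (l := r + s) (r := r) (t := 0) (A := B) (by omega) fun A hA hAr => by
      rw [inter_comm]
      exact card_pos.2 (hcross A (hsub (mem_powersetCard.2 ⟨hA, hAr⟩)) B hB)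
    omega
  · refine disjoint_left.2 fun B hB hBX => ?_
    obtain ⟨-, -, A, hA, hAB⟩ := mem_filter.1 hBX
    exact (hcross A hA B hB).ne_empty (disjoint_iff_inter_eq_empty.1 hAB)

end Counting

end CrossIntersecting

open CrossIntersecting in
theorem frankl_conjecture
    (t s k n : ℕ) (hk : s + 1 ≤ k) (hn : 2 * k + t ≤ n)
    (F G : Finset (Finset ℕ))
    (hF : F ⊆ powersetCard (k + t) (Icc 1 n))
    (hG : G ⊆ powersetCard k (Icc 1 n))
    (hcross : ∀ A ∈ F, ∀ B ∈ G, (A ∩ B).Nonempty)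
    (hint : ∀ A ∈ F, ∀ A' ∈ F, t + 1 ≤ (A ∩ A').card)
    (hsub : powersetCard (k + t) (Icc 1 (k + t + s)) ⊆ F) :
    F.card + G.card ≤
      Nat.choose (k + t + s) (k + t) + Nat.choose n k
        - ∑ i ∈ Finset.range (s + 1),
            Nat.choose (k + t + s) i * Nat.choose (n - k - t - s) (k - i) := by
  have hGX := card_add_card_avoidingSets_le hG hcross hsub
  have hFX := card_sdiff_le_card_avoidingSets hn hF hint hsub
  have hFsplit := card_sdiff_add_card_eq_card hsub
  rw [card_powersetCard, Nat.card_Icc, Nat.add_sub_cancel] at hFsplit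
  have hcount := card_filter_succ_le_traceCard_add_sum (l := k + t + s) (n := n) (k := k) (s := s)
    (by omega) (by omega)
  rw [show n - k - t - s = n - (k + t + s) by omega]
  omega
end

section
/- Let k, ℓ, n be integers with k ≥ ℓ ≥ 1 and n ≥ k+ℓ. Let ℱ ⊆ C([n], k) and 𝒢 ⊆ C([n], ℓ) be cross-intersecting families. If 𝒢 is shifted, intersecting and non-trivial (i.e., not all sets of 𝒢 contain a common element), then |ℱ| + |𝒢| ≤ ℓ + 1 + C(n, k) − C(n−ℓ−1, k) − (ℓ+1)·C(n−ℓ−1, k−1). -/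
/-!
Since `G` is shifted and one of its members avoids `1`, `G` contains every `l`-subset of
`[l + 1]`. As `G` is intersecting and `F` cross-intersects `G`, every member of either family meets
`[l + 1]` in at least two points; enlarging `F` to all `k`-sets that meet every member of `G` keeps
this and makes `F` shifted.

For shifted cross-intersecting `F`, `G` whose members all meet `[w]` twice (`l + 1 ≤ w`), the sum of
`#F` and the number of `B ∈ G` with `#(B ∩ [w]) ≤ w - 2` is at most the number of `k`-subsets of
`[N]` meeting `[w]` twice. This goes by induction on `N`, splitting both families according to
whether they contain `N`; both counts obey Pascal's rule. Cross-intersection passes to the links at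
`N` because shifted cross-intersecting families already meet inside `[k + l - 1]`. For `N = k + l`
complementation maps the counted members of `G` into the counted `k`-sets outside `F`; for `N ≤ w`
all `k`-sets are counted, and double counting disjoint pairs gives `#F + #G ≤ N.choose k`.

With `w = l + 1` the members of `G` left out are `l`-subsets of `[l + 1]`, at most `l + 1` of them,
and the count of `k`-sets meeting `[l + 1]` twice is read off from their traces on `[l + 1]`.
-/

open Finset

namespace Finset

variable {α : Type*} [DecidableEq α]

theorem card_filter_card_inter_eq {s t : Finset α} (hst : Disjoint s t) {j k : ℕ}
    (hjk : j ≤ k) :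
    #((powersetCard k (s ∪ t)).filter fun A => #(A ∩ s) = j) =
      (#s).choose j * (#t).choose (k - j) := by
  rw [← card_powersetCard, ← card_powersetCard, ← card_product]
  refine card_nbij' (fun A => (A ∩ s, A \ s)) (fun p => p.1 ∪ p.2) ?_ ?_ ?_ ?_
  · intro A hA
    simp only [coe_filter, mem_powersetCard, Set.mem_ofPred_eq] at hA
    simp only [coe_product, Set.mem_prod, mem_coe, mem_powersetCard]
    refine ⟨⟨inter_subset_right, hA.2⟩, fun x hx => ?_, ?_⟩
    · have := hA.1.1 (mem_sdiff.1 hx).1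
      simp only [mem_union] at this
      exact this.resolve_left (mem_sdiff.1 hx).2
    · have := card_inter_add_card_sdiff A s
      omega
  · rintro ⟨X, Y⟩ h
    simp only [coe_product, Set.mem_prod, mem_coe, mem_powersetCard] at h
    obtain ⟨⟨hXs, hX⟩, hYt, hY⟩ := h
    have hXY : Disjoint X Y := hst.mono hXs hYt
    have hYs : Y ∩ s = ∅ := disjoint_iff_inter_eq_empty.1 (hst.symm.mono_left hYt)
    simp only [coe_filter, mem_powersetCard, Set.mem_ofPred_eq]
    refine ⟨⟨union_subset_union hXs hYt, by rw [card_union_of_disjoint hXY]; omega⟩, ?_⟩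
    rw [union_inter_distrib_right, inter_eq_left.2 hXs, hYs, union_empty, hX]
  · intro A _
    exact (union_comm _ _).trans (sdiff_union_inter A s)
  · rintro ⟨X, Y⟩ h
    simp only [coe_product, Set.mem_prod, mem_coe, mem_powersetCard] at h
    obtain ⟨⟨hXs, -⟩, hYt, -⟩ := h
    have hYs : Disjoint Y s := hst.symm.mono_left hYt
    simp only [Prod.mk.injEq]
    constructor
    · rw [union_inter_distrib_right, inter_eq_left.2 hXs, disjoint_iff_inter_eq_empty.1 hYs,
        union_empty]
    · rw [union_sdiff_distrib, sdiff_eq_empty_iff_subset.2 hXs, empty_union,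
        sdiff_eq_self_of_disjoint hYs]

theorem two_le_card_inter_of_forall_inter_nonempty {A t : Finset α} {l : ℕ}
    (ht : #t = l + 1) (hA : ∀ C ∈ powersetCard l t, (A ∩ C).Nonempty) : 2 ≤ #(A ∩ t) := by
  by_contra! h
  obtain ⟨C, hC, hCl⟩ := exists_subset_card_eq (show l ≤ #(t \ A) by rw [card_sdiff]; omega)
  obtain ⟨x, hx⟩ := hA C (mem_powersetCard.2 ⟨hC.trans sdiff_subset, hCl⟩)
  rw [mem_inter] at hx
  exact (mem_sdiff.1 (hC hx.2)).2 hx.1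

theorem card_le_card_filter_add {G : Finset (Finset α)} {t : Finset α} {l : ℕ}
    (ht : #t = l + 1) (hG : ∀ B ∈ G, #B = l) :
    #G ≤ #(G.filter fun B => #(B ∩ t) + 2 ≤ l + 1) + (l + 1) := by
  have hsub : G.filter (fun B => ¬ #(B ∩ t) + 2 ≤ l + 1) ⊆ powersetCard l t := fun B hB => by
    rw [mem_filter] at hB
    have hBt : B ∩ t = B := eq_of_subset_of_card_le inter_subset_left (by grind)
    exact mem_powersetCard.2 ⟨inter_eq_left.1 hBt, hG B hB.1⟩
  have hrest := card_le_card hsub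
  rw [card_powersetCard, ht, Nat.choose_succ_self_right] at hrest
  have := card_filter_add_card_filter_not (s := G) fun B => #(B ∩ t) + 2 ≤ l + 1
  omega

variable {𝒜 ℬ : Finset (Finset α)} {a : α}

theorem nonMemberSubfamily_mono (h : 𝒜 ⊆ ℬ) :
    𝒜.nonMemberSubfamily a ⊆ ℬ.nonMemberSubfamily a :=
  filter_subset_filter _ h

theorem memberSubfamily_mono (h : 𝒜 ⊆ ℬ) : 𝒜.memberSubfamily a ⊆ ℬ.memberSubfamily a :=
  image_subset_image (filter_subset_filter _ h)

theorem nonMemberSubfamily_filter (p : Finset α → Prop) [DecidablePred p] :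
    (𝒜.filter p).nonMemberSubfamily a = (𝒜.nonMemberSubfamily a).filter p := by
  ext s
  simp only [mem_nonMemberSubfamily, mem_filter]
  tauto

theorem memberSubfamily_filter (p : Finset α → Prop) [DecidablePred p]
    (hp : ∀ s, p (insert a s) ↔ p s) :
    (𝒜.filter p).memberSubfamily a = (𝒜.memberSubfamily a).filter p := by
  ext s
  simp only [mem_memberSubfamily, mem_filter, hp]
  tauto

theorem nonMemberSubfamily_powersetCard (s : Finset α) (k : ℕ) :
    (powersetCard k s).nonMemberSubfamily a = powersetCard k (s.erase a) := by
  ext A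
  simp only [mem_nonMemberSubfamily, mem_powersetCard, subset_erase]
  tauto

theorem memberSubfamily_powersetCard_succ {s : Finset α} (ha : a ∈ s) (k : ℕ) :
    (powersetCard (k + 1) s).memberSubfamily a = powersetCard k (s.erase a) := by
  ext A
  simp only [mem_memberSubfamily, mem_powersetCard, subset_erase, insert_subset_iff]
  constructor
  · rintro ⟨⟨⟨-, hAs⟩, hcard⟩, haA⟩
    rw [card_insert_of_notMem haA] at hcard
    exact ⟨⟨hAs, haA⟩, by omega⟩
  · rintro ⟨⟨hAs, haA⟩, hcard⟩
    exact ⟨⟨⟨ha, hAs⟩, by rw [card_insert_of_notMem haA, hcard]⟩, haA⟩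

end Finset

theorem Nat.choose_sub_le_choose_sub {m k l : ℕ} (hlk : l ≤ k) (h : k + l ≤ m) :
    (m - k).choose l ≤ (m - l).choose k := by
  rw [← Nat.choose_symm (by omega : l ≤ m - k), ← Nat.choose_symm (by omega : k ≤ m - l),
    show m - k - l = m - l - k by omega]
  exact Nat.choose_le_choose _ (by omega)

def CrossIntersecting {α : Type*} [DecidableEq α] (F G : Finset (Finset α)) : Prop :=
  ∀ A ∈ F, ∀ B ∈ G, (A ∩ B).Nonempty

namespace CrossIntersecting

variable {α : Type*} [DecidableEq α] {F G : Finset (Finset α)} {s : Finset α}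

theorem mono {F' G' : Finset (Finset α)} (h : CrossIntersecting F G) (hF : F' ⊆ F)
    (hG : G' ⊆ G) : CrossIntersecting F' G' :=
  fun A hA B hB => h A (hF hA) B (hG hB)

theorem card_add_card_le_of_sdiff_mem {T : Finset (Finset α)} (hcross : CrossIntersecting F G)
    (hFT : F ⊆ T) (hGs : ∀ B ∈ G, B ⊆ s) (hGT : ∀ B ∈ G, s \ B ∈ T) : #F + #G ≤ #T := by
  have hinj : Set.InjOn (s \ ·) G := fun B hB C hC h => by
    rw [← Finset.sdiff_sdiff_eq_self (hGs B hB), ← Finset.sdiff_sdiff_eq_self (hGs C hC)]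
    exact congrArg (s \ ·) h
  have hsub : G.image (s \ ·) ⊆ T \ F := fun A hA => by
    obtain ⟨B, hB, rfl⟩ := mem_image.1 hA
    refine mem_sdiff.2 ⟨hGT B hB, fun hF => ?_⟩
    obtain ⟨x, hx⟩ := hcross _ hF B hB
    simp at hx
  have := card_le_card hsub
  rw [card_image_of_injOn hinj, card_sdiff_of_subset hFT] at this
  have := card_le_card hFT
  omega

theorem card_add_card_le_choose {k l : ℕ} (hlk : l ≤ k) (hkl : k + l ≤ #s)
    (hF : F ⊆ powersetCard k s) (hG : G ⊆ powersetCard l s) (hcross : CrossIntersecting F G) :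
    #F + #G ≤ (#s).choose k := by
  set U := powersetCard k s \ F
  -- every `B ∈ G` is disjoint from `(#s - l).choose k` members of `U`, every `A ∈ U` from at
  -- most `(#s - k).choose l` members of `G`
  have hcount : #G * (#s - l).choose k ≤ #U * (#s - k).choose l := by
    refine card_mul_le_card_mul (fun B A => Disjoint B A) (fun B hB => ?_) (fun A hA => ?_)
    · obtain ⟨hBs, hBl⟩ := mem_powersetCard.1 (hG hB)
      calc (#s - l).choose k = #(powersetCard k (s \ B)) := by
            rw [card_powersetCard, card_sdiff_of_subset hBs, hBl]
        _ ≤ _ := card_le_card fun A hA => ?_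
      obtain ⟨hAs, hAk⟩ := mem_powersetCard.1 hA
      have hBA : Disjoint B A := disjoint_sdiff.mono_right hAs
      refine (mem_bipartiteAbove _).2
        ⟨mem_sdiff.2 ⟨mem_powersetCard.2 ⟨hAs.trans sdiff_subset, hAk⟩, fun hAF => ?_⟩, hBA⟩
      obtain ⟨x, hx⟩ := hcross A hAF B hB
      exact disjoint_left.1 hBA (mem_inter.1 hx).2 (mem_inter.1 hx).1
    · obtain ⟨hAs, hAk⟩ := mem_powersetCard.1 (sdiff_subset hA)
      calc #(G.bipartiteBelow _ A) ≤ #(powersetCard l (s \ A)) := card_le_card fun B hB => ?_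
        _ = (#s - k).choose l := by rw [card_powersetCard, card_sdiff_of_subset hAs, hAk]
      obtain ⟨hBG, hBA⟩ := (mem_bipartiteBelow _).1 hB
      obtain ⟨hBs, hBl⟩ := mem_powersetCard.1 (hG hBG)
      exact mem_powersetCard.2 ⟨subset_sdiff.2 ⟨hBs, hBA⟩, hBl⟩
  have hGU : #G ≤ #U := Nat.le_of_mul_le_mul_right
    (hcount.trans (Nat.mul_le_mul_left _ (Nat.choose_sub_le_choose_sub hlk hkl)))
    (Nat.choose_pos (by omega))
  have := card_le_card hF
  rw [card_sdiff_of_subset hF, card_powersetCard] at hGU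
  rw [card_powersetCard] at this
  omega

end CrossIntersecting

def Shifted (H : Finset (Finset ℕ)) : Prop :=
  ∀ B ∈ H, ∀ i j : ℕ, 1 ≤ i → i < j → i ∉ B → j ∈ B → insert i (B.erase j) ∈ H

theorem shifted_powersetCard_Icc (k n : ℕ) : Shifted (powersetCard k (Icc 1 n)) := by
  intro A hA i j hi hij hiA hjA
  obtain ⟨hAn, hAk⟩ := mem_powersetCard.1 hA
  have hj := mem_Icc.1 (hAn hjA)
  refine mem_powersetCard.2 ⟨insert_subset (mem_Icc.2 ⟨hi, by omega⟩)
    ((erase_subset _ _).trans hAn), ?_⟩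
  rw [card_insert_of_notMem (fun h => hiA (mem_of_mem_erase h)), card_erase_of_mem hjA, hAk]
  have := hAk ▸ card_pos.2 ⟨j, hjA⟩
  omega

namespace Shifted

variable {F G H : Finset (Finset ℕ)}

theorem mem_of_forall_lt (hF : Shifted F) {A D : Finset ℕ} (hA : A ∈ F) (hcard : #D = #A)
    (h0 : 0 ∉ D) (hlt : ∀ x ∈ D \ A, ∀ y ∈ A \ D, x < y) : D ∈ F := by
  induction hm : #(D \ A) generalizing A with
  | zero =>
    have hDA : D ⊆ A := sdiff_eq_empty_iff_subset.1 (card_eq_zero.1 hm)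
    rwa [eq_of_subset_of_card_le hDA hcard.ge]
  | succ m ih =>
    obtain ⟨x, hx⟩ : (D \ A).Nonempty := card_pos.1 (by omega)
    obtain ⟨y, hy⟩ : (A \ D).Nonempty := card_pos.1 (by rw [card_sdiff_comm hcard.symm]; omega)
    obtain ⟨hxD, hxA⟩ := mem_sdiff.1 hx
    obtain ⟨hyA, hyD⟩ := mem_sdiff.1 hy
    have hx0 : x ≠ 0 := fun h => h0 (h ▸ hxD)
    refine ih (hF A hA x y (by omega) (hlt x hx y hy) hxA hyA) ?_
      (fun a ha b hb => hlt a ?_ b ?_) ?_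
    · rw [card_insert_of_notMem (fun h => hxA (mem_of_mem_erase h)), card_erase_of_mem hyA]
      have : 0 < #A := card_pos.2 ⟨y, hyA⟩
      omega
    · simp only [mem_sdiff, mem_insert, mem_erase, not_or] at ha ⊢
      exact ⟨ha.1, fun haA => ha.2.2 ⟨by rintro rfl; exact hyD ha.1, haA⟩⟩
    · simp only [mem_sdiff, mem_insert, mem_erase] at hb ⊢
      rcases hb with ⟨rfl | ⟨-, hb⟩, hbD⟩
      · exact absurd hxD hbD
      · exact ⟨hb, hbD⟩
    · have : D \ insert x (A.erase y) = (D \ A).erase x := by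
        ext a
        simp only [mem_sdiff, mem_insert, mem_erase]
        constructor
        · rintro ⟨haD, hne⟩
          refine ⟨fun h => hne (Or.inl h), haD, fun haA => hne (Or.inr ⟨?_, haA⟩)⟩
          rintro rfl
          exact hyD haD
        · rintro ⟨hax, haD, haA⟩
          exact ⟨haD, by rintro (h | h) <;> tauto⟩
      rw [this, card_erase_of_mem hx, hm]
      rfl

theorem powersetCard_Icc_subset (hG : Shifted G) {B : Finset ℕ} {l : ℕ} (hB : B ∈ G)
    (hBl : #B = l) (h0 : 0 ∉ B) (h1 : 1 ∉ B) : powersetCard l (Icc 1 (l + 1)) ⊆ G := by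
  have hseg : Icc 2 (l + 1) ∈ G := by
    refine hG.mem_of_forall_lt hB (by simp [hBl]) (by simp) fun x hx y hy => ?_
    simp only [mem_sdiff, mem_Icc] at hx hy
    have : y ≠ 0 := by rintro rfl; exact h0 hy.1
    have : y ≠ 1 := by rintro rfl; exact h1 hy.1
    omega
  intro D hD
  obtain ⟨hDsub, hDl⟩ := mem_powersetCard.1 hD
  refine hG.mem_of_forall_lt hseg (by simp [hDl]) (fun h => by simpa using hDsub h)
    fun x hx y hy => ?_
  have := hDsub (mem_sdiff.1 hx).1
  simp only [mem_sdiff, mem_Icc] at hx hy this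
  omega

theorem filter_forall_inter_nonempty (hF : Shifted F) (hG : Shifted G) :
    Shifted (F.filter fun A => ∀ B ∈ G, (A ∩ B).Nonempty) := by
  intro A hA i j hi hij hiA hjA
  rw [mem_filter] at hA ⊢
  refine ⟨hF A hA.1 i j hi hij hiA hjA, fun B hB => ?_⟩
  by_contra hAB
  rw [not_nonempty_iff_eq_empty, eq_empty_iff_forall_notMem] at hAB
  have hiB : i ∉ B := fun h => hAB i (mem_inter.2 ⟨mem_insert_self _ _, h⟩)
  -- `A` meets `B` only in `j`, and then cannot meet the shift of `B` at all
  have hAB_j : ∀ y ∈ A, y ∈ B → y = j := fun y hyA hyB => by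
    by_contra hyj
    exact hAB y (mem_inter.2 ⟨mem_insert_of_mem (mem_erase.2 ⟨hyj, hyA⟩), hyB⟩)
  have hjB : j ∈ B := by
    obtain ⟨y, hy⟩ := hA.2 B hB
    rw [mem_inter] at hy
    exact hAB_j y hy.1 hy.2 ▸ hy.2
  obtain ⟨y, hy⟩ := hA.2 _ (hG B hB i j hi hij hiB hjB)
  simp only [mem_inter, mem_insert, mem_erase] at hy
  rcases hy with ⟨hyA, rfl | ⟨hyj, hyB⟩⟩
  · exact hiA hyA
  · exact hyj (hAB_j y hyA hyB)

theorem nonMemberSubfamily (hH : Shifted H) {N : ℕ} (hHN : ∀ B ∈ H, ∀ x ∈ B, x ≤ N) :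
    Shifted (H.nonMemberSubfamily N) := by
  intro B hB i j hi hij hiB hjB
  rw [mem_nonMemberSubfamily] at hB ⊢
  have := hHN B hB.1 j hjB
  refine ⟨hH B hB.1 i j hi hij hiB hjB, ?_⟩
  simp only [mem_insert, mem_erase, not_or]
  exact ⟨by omega, fun h => hB.2 h.2⟩

theorem memberSubfamily (hH : Shifted H) {N : ℕ} (hHN : ∀ B ∈ H, ∀ x ∈ B, x ≤ N) :
    Shifted (H.memberSubfamily N) := by
  intro B hB i j hi hij hiB hjB
  rw [mem_memberSubfamily] at hB ⊢
  have hjN : j ≠ N := by rintro rfl; exact hB.2 hjB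
  have := hHN _ hB.1 j (mem_insert_of_mem hjB)
  have hshift := hH _ hB.1 i j hi hij (by simp [hiB]; omega) (mem_insert_of_mem hjB)
  refine ⟨?_, by simp [hB.2]; omega⟩
  rwa [insert_comm, ← erase_insert_of_ne hjN.symm]

theorem inter_inter_Icc_nonempty (hF : Shifted F) {A B : Finset ℕ} {k l : ℕ} (hA : A ∈ F)
    (hAk : #A = k) (h0 : 0 ∉ A) (hBl : #B = l) (hB : ∀ A' ∈ F, (A' ∩ B).Nonempty) :
    (A ∩ B ∩ Icc 1 (k + l - 1)).Nonempty := by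
  set I := Icc 1 (k + l - 1)
  by_contra hABI
  have hBI : #(B ∩ I) < l := by
    by_contra! hl
    have hBsub : B ∩ I = B := eq_of_subset_of_card_le inter_subset_left (by omega)
    rw [inter_assoc, hBsub] at hABI
    exact hABI (hB A hA)
  rw [not_nonempty_iff_eq_empty] at hABI
  -- move the elements of `A` beyond `I` into free places of `I`, avoiding `B`
  have hfree : #(A \ I) ≤ #(I \ (A ∪ B)) := by
    have hI : #I = k + l - 1 := by simp [I]
    have hAI := card_sdiff_add_card_inter A I
    have hunion : #((A ∪ B) ∩ I) ≤ #(A ∩ I) + #(B ∩ I) :=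
      union_inter_distrib_right A B I ▸ card_union_le _ _
    have hfreeI := card_sdiff (s := A ∪ B) (t := I)
    omega
  obtain ⟨Z, hZ, hZcard⟩ := exists_subset_card_eq hfree
  have hZI : ∀ z ∈ Z, z ∈ I ∧ z ∉ A ∧ z ∉ B := fun z hz => by
    simpa [not_or] using hZ hz
  have hD : A ∩ I ∪ Z ∈ F := by
    refine hF.mem_of_forall_lt hA ?_ ?_ fun x hx y hy => ?_
    · have hdisj : Disjoint (A ∩ I) Z :=
        disjoint_right.2 fun z hz h => (hZI z hz).2.1 (mem_inter.1 h).1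
      rw [card_union_of_disjoint hdisj, hZcard, add_comm, card_sdiff_add_card_inter]
    · simp only [mem_union, mem_inter, not_or, not_and]
      exact ⟨fun h => absurd h h0, fun h => by simpa [I] using (hZI 0 h).1⟩
    · simp only [mem_sdiff, mem_union, mem_inter, not_or, not_and] at hx hy
      have hxI : x ∈ I := hx.1.elim (fun h => absurd h.1 hx.2) (fun h => (hZI x h).1)
      have hyI : y ∉ I := fun h => hy.2.1 hy.1 h
      have hy0 : y ≠ 0 := by rintro rfl; exact h0 hy.1
      simp only [I, mem_Icc] at hxI hyI
      omega
  obtain ⟨x, hx⟩ := hB _ hD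
  simp only [mem_inter, mem_union] at hx
  rcases hx with ⟨⟨hxA, hxI⟩ | hxZ, hxB⟩
  · exact notMem_empty x (hABI ▸ mem_inter.2 ⟨mem_inter.2 ⟨hxA, hxB⟩, hxI⟩)
  · exact (hZI x hxZ).2.2 hxB

theorem crossIntersecting_memberSubfamily {N k l : ℕ}
    (hsF : Shifted F) (hF : F ⊆ powersetCard k (Icc 1 N)) (hG : G ⊆ powersetCard l (Icc 1 N))
    (hN : k + l ≤ N) (hcross : CrossIntersecting F G) :
    CrossIntersecting (F.memberSubfamily N) (G.memberSubfamily N) := by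
  intro A hA B hB
  rw [mem_memberSubfamily] at hA hB
  obtain ⟨hAN, hAk⟩ := mem_powersetCard.1 (hF hA.1)
  obtain ⟨x, hx⟩ := hsF.inter_inter_Icc_nonempty hA.1 hAk (fun h => by simpa using hAN h)
    (mem_powersetCard.1 (hG hB.1)).2 fun A' hA' => hcross A' hA' _ hB.1
  simp only [mem_inter, mem_insert, mem_Icc] at hx
  exact ⟨x, mem_inter.2 ⟨hx.1.1.resolve_left (by omega), hx.1.2.resolve_left (by omega)⟩⟩

end Shifted

def meetsTwice (N k w : ℕ) : Finset (Finset ℕ) :=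
  (powersetCard k (Icc 1 N)).filter fun A => 2 ≤ #(A ∩ Icc 1 w)

section meetsTwice

variable {N M k w : ℕ}

theorem mem_meetsTwice {A : Finset ℕ} :
    A ∈ meetsTwice N k w ↔ A ⊆ Icc 1 N ∧ #A = k ∧ 2 ≤ #(A ∩ Icc 1 w) := by
  simp [meetsTwice, and_assoc]

theorem meetsTwice_subset : meetsTwice N k w ⊆ powersetCard k (Icc 1 N) :=
  filter_subset _ _

theorem meetsTwice_eq_empty (hk : k ≤ 1) : meetsTwice N k w = ∅ :=
  filter_false_of_mem fun A hA => by
    have := card_le_card (inter_subset_left : A ∩ Icc 1 w ⊆ A)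
    rw [(mem_powersetCard.1 hA).2] at this
    omega

theorem meetsTwice_eq_powersetCard (hNw : N ≤ w) (hk : 2 ≤ k) :
    meetsTwice N k w = powersetCard k (Icc 1 N) :=
  filter_true_of_mem fun A hA => by
    obtain ⟨hAN, hAk⟩ := mem_powersetCard.1 hA
    rwa [inter_eq_left.2 (hAN.trans (Icc_subset_Icc_right hNw)), hAk]

theorem Icc_one_erase_succ (M : ℕ) : (Icc 1 (M + 1)).erase (M + 1) = Icc 1 M := by
  rw [Icc_erase_right, Ico_add_one_right_eq_Icc]

theorem nonMemberSubfamily_meetsTwice :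
    (meetsTwice (M + 1) k w).nonMemberSubfamily (M + 1) = meetsTwice M k w := by
  rw [meetsTwice, nonMemberSubfamily_filter, nonMemberSubfamily_powersetCard, Icc_one_erase_succ,
    meetsTwice]

theorem memberSubfamily_meetsTwice (hw : w ≤ M) :
    (meetsTwice (M + 1) (k + 1) w).memberSubfamily (M + 1) = meetsTwice M k w := by
  rw [meetsTwice, memberSubfamily_filter _ fun A => by
      rw [insert_inter_of_notMem (by simp; omega)],
    memberSubfamily_powersetCard_succ (by simp), Icc_one_erase_succ, meetsTwice]

theorem card_meetsTwice_succ (hw : w ≤ M) :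
    #(meetsTwice (M + 1) (k + 1) w) = #(meetsTwice M (k + 1) w) + #(meetsTwice M k w) := by
  rw [← card_memberSubfamily_add_card_nonMemberSubfamily (M + 1), memberSubfamily_meetsTwice hw,
    nonMemberSubfamily_meetsTwice, add_comm]

theorem sdiff_mem_meetsTwice {l : ℕ} {B : Finset ℕ} (hB : B ∈ powersetCard l (Icc 1 (k + l)))
    (hw : w ≤ k + l) (htrace : #(B ∩ Icc 1 w) + 2 ≤ w) :
    Icc 1 (k + l) \ B ∈ meetsTwice (k + l) k w := by
  obtain ⟨hBs, hBl⟩ := mem_powersetCard.1 hB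
  have htr : (Icc 1 (k + l) \ B) ∩ Icc 1 w = Icc 1 w \ B := by
    rw [sdiff_inter_right_comm, inter_eq_right.2 (Icc_subset_Icc_right hw)]
  refine mem_meetsTwice.2 ⟨sdiff_subset, ?_, ?_⟩
  · rw [card_sdiff_of_subset hBs, hBl]
    simp
  · rw [htr, card_sdiff]
    simp only [Nat.card_Icc, add_tsub_cancel_right]
    omega

theorem card_meetsTwice_add (hwN : w ≤ N) (hk : 1 ≤ k) :
    #(meetsTwice N k w) + (N - w).choose k + w * (N - w).choose (k - 1) = N.choose k := by
  have hsplit : Icc 1 N = Icc 1 w ∪ Icc (w + 1) N := by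
    ext x
    simp only [mem_union, mem_Icc]
    omega
  have hdisj : Disjoint (Icc 1 w) (Icc (w + 1) N) :=
    disjoint_left.2 fun x h1 h2 => by simp only [mem_Icc] at h1 h2; omega
  have hcount (j : ℕ) (hj : j ≤ k) :
      #((powersetCard k (Icc 1 N)).filter fun A => #(A ∩ Icc 1 w) = j) =
        w.choose j * (N - w).choose (k - j) := by
    rw [hsplit, card_filter_card_inter_eq hdisj hj]
    simp
  have hsmall : (powersetCard k (Icc 1 N)).filter (fun A => ¬ 2 ≤ #(A ∩ Icc 1 w)) =
      ((powersetCard k (Icc 1 N)).filter fun A => #(A ∩ Icc 1 w) = 0) ∪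
        (powersetCard k (Icc 1 N)).filter fun A => #(A ∩ Icc 1 w) = 1 := by
    rw [← filter_or]
    exact filter_congr fun A _ => by omega
  have := card_filter_add_card_filter_not (s := powersetCard k (Icc 1 N))
    (fun A => 2 ≤ #(A ∩ Icc 1 w))
  rw [hsmall, card_union_of_disjoint (disjoint_filter.2 fun A _ h => by omega),
    hcount 0 (by omega), hcount 1 hk, card_powersetCard] at this
  simp only [Nat.card_Icc, add_tsub_cancel_right, Nat.choose_zero_right, one_mul,
    Nat.choose_one_right, Nat.sub_zero] at this
  rw [meetsTwice]
  omega

end meetsTwice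

theorem card_add_card_filter_le_card_meetsTwice {N k l w : ℕ} {F G : Finset (Finset ℕ)}
    (hlk : l ≤ k) (hN : k + l ≤ N) (hw : l + 1 ≤ w)
    (hF : F ⊆ meetsTwice N k w) (hG : G ⊆ meetsTwice N l w)
    (hcross : CrossIntersecting F G) (hsF : Shifted F) (hsG : Shifted G) :
    #F + #(G.filter fun B => #(B ∩ Icc 1 w) + 2 ≤ w) ≤ #(meetsTwice N k w) := by
  induction N using Nat.strong_induction_on generalizing k l F G with | _ N ih =>
  rcases le_or_gt l 1 with hl | hl
  · rw [meetsTwice_eq_empty hl, subset_empty] at hG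
    simpa [hG] using card_le_card hF
  have hG' := hG.trans meetsTwice_subset
  rcases le_or_gt N w with hNw | hwN
  · rw [meetsTwice_eq_powersetCard hNw (by omega)] at hF ⊢
    calc _ ≤ #F + #G := by grw [filter_subset]
      _ ≤ _ := by simpa using hcross.card_add_card_le_choose hlk (by simpa) hF hG'
  rcases hN.eq_or_lt with rfl | hN
  · refine (hcross.mono subset_rfl (filter_subset _ _)).card_add_card_le_of_sdiff_mem hF
      (fun B hB => (mem_powersetCard.1 (hG' (mem_filter.1 hB).1)).1) fun B hB => ?_
    rw [mem_filter] at hB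
    exact sdiff_mem_meetsTwice (hG' hB.1) hwN.le hB.2
  obtain ⟨M, rfl⟩ : ∃ M, N = M + 1 := ⟨N - 1, by omega⟩
  obtain ⟨k, rfl⟩ : ∃ k', k = k' + 1 := ⟨k - 1, by omega⟩
  obtain ⟨l, rfl⟩ : ∃ l', l = l' + 1 := ⟨l - 1, by omega⟩
  have hF' := hF.trans meetsTwice_subset
  have hbound {H : Finset (Finset ℕ)} {j : ℕ} (hH : H ⊆ powersetCard j (Icc 1 (M + 1))) :
      ∀ B ∈ H, ∀ x ∈ B, x ≤ M + 1 := fun B hB x hx =>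
    (mem_Icc.1 ((mem_powersetCard.1 (hH hB)).1 hx)).2
  have h0 := ih M (by omega) hlk (by omega) hw
    ((nonMemberSubfamily_mono hF).trans nonMemberSubfamily_meetsTwice.subset)
    ((nonMemberSubfamily_mono hG).trans nonMemberSubfamily_meetsTwice.subset)
    (hcross.mono (filter_subset _ _) (filter_subset _ _))
    (hsF.nonMemberSubfamily (hbound hF')) (hsG.nonMemberSubfamily (hbound hG'))
  have h1 := ih M (by omega) (by omega) (by omega) (by omega)
    ((memberSubfamily_mono hF).trans (memberSubfamily_meetsTwice (by omega)).subset)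
    ((memberSubfamily_mono hG).trans (memberSubfamily_meetsTwice (by omega)).subset)
    (hsF.crossIntersecting_memberSubfamily hF' hG' (by omega) hcross)
    (hsF.memberSubfamily (hbound hF')) (hsG.memberSubfamily (hbound hG'))
  rw [card_meetsTwice_succ (by omega),
    ← card_memberSubfamily_add_card_nonMemberSubfamily (M + 1) F,
    ← card_memberSubfamily_add_card_nonMemberSubfamily (M + 1) (G.filter _),
    memberSubfamily_filter _ fun B => by rw [insert_inter_of_notMem (by simp; omega)],
    nonMemberSubfamily_filter]
  omega

theorem cross_intersecting_shifted_nontrivial_bound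
    (k l n : ℕ) (hl : 1 ≤ l) (hlk : l ≤ k) (hn : k + l ≤ n)
    (F G : Finset (Finset ℕ))
    (hF : F ⊆ powersetCard k (Icc 1 n))
    (hG : G ⊆ powersetCard l (Icc 1 n))
    (hcross : ∀ A ∈ F, ∀ B ∈ G, (A ∩ B).Nonempty)
    (hGint : ∀ B ∈ G, ∀ B' ∈ G, (B ∩ B').Nonempty)
    (hshift : ∀ B ∈ G, ∀ i j : ℕ, 1 ≤ i → i < j → i ∉ B → j ∈ B →
      insert i (B.erase j) ∈ G)
    (hnontriv : ¬ ∃ x ∈ Icc 1 n, ∀ B ∈ G, x ∈ B) :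
    F.card + G.card ≤
      l + 1 + Nat.choose n k - Nat.choose (n - l - 1) k
        - (l + 1) * Nat.choose (n - l - 1) (k - 1) := by
  have hsG : Shifted G := hshift
  obtain ⟨B₀, hB₀, h1B₀⟩ : ∃ B ∈ G, 1 ∉ B := by
    push Not at hnontriv
    exact hnontriv 1 (by simp; omega)
  obtain ⟨hB₀n, hB₀l⟩ := mem_powersetCard.1 (hG hB₀)
  have hD : powersetCard l (Icc 1 (l + 1)) ⊆ G :=
    hsG.powersetCard_Icc_subset hB₀ hB₀l (fun h => by simpa using hB₀n h) h1B₀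
  have htrace {A : Finset ℕ} (hA : ∀ B ∈ G, (A ∩ B).Nonempty) : 2 ≤ #(A ∩ Icc 1 (l + 1)) :=
    two_le_card_inter_of_forall_inter_nonempty (by simp) fun C hC => hA C (hD hC)
  set F' := (powersetCard k (Icc 1 n)).filter fun A => ∀ B ∈ G, (A ∩ B).Nonempty
  have hFF' : F ⊆ F' := fun A hA => mem_filter.2 ⟨hF hA, hcross A hA⟩
  have hmain := card_add_card_filter_le_card_meetsTwice (F := F') hlk hn le_rfl
    (fun A hA => mem_filter.2 ⟨(mem_filter.1 hA).1, htrace (mem_filter.1 hA).2⟩)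
    (fun B hB => mem_filter.2 ⟨hG hB, htrace (hGint B hB)⟩) (fun A hA => (mem_filter.1 hA).2)
    ((shifted_powersetCard_Icc k n).filter_forall_inter_nonempty hsG) hsG
  have hlarge := card_le_card_filter_add (t := Icc 1 (l + 1)) (by simp) fun B hB =>
    (mem_powersetCard.1 (hG hB)).2
  have hcount := card_meetsTwice_add (show l + 1 ≤ n by omega) (show 1 ≤ k by omega)
  have := card_le_card hFF'
  rw [show n - l - 1 = n - (l + 1) by omega]
  omega
end

section
/- Let s, k, n, m be integers with s ≥ 0, k ≥ s+1, n > k+s and m > 2s+1. Let ℱ ⊆ {A ∈ C([n], k) : |A ∩ [m]| ≥ s+1} and 𝒢 ⊆ {B ∈ C([n], s+1) : |B ∩ [m]| ≥ s+1} be cross-intersecting families. Then |ℱ| + |𝒢| ≤ C(n, k) − Σ_{i=0}^{s} C(m, i)·C(n−m, k−i). -/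
/-!
Let `U` be the family of `k`-subsets of `[n]` meeting `[m]` in at least `s + 1` points; its
complement among the `k`-subsets of `[n]` contains, for each `i ≤ s`, the `C(m, i) C(n - m, k - i)`
sets meeting `[m]` in exactly `i` points, so it suffices to show `|ℱ| + |𝒢| ≤ |U|`.
Join `B ∈ 𝒢` to the sets `A ∈ U` disjoint from it. Such a `B` is an `(s + 1)`-subset of `[m] \ A`,
and `|A ∩ [m]| ≥ max (s + 1) (k - (n - m))`, so every `A` has at most
`D = C(min (m - s - 1) (n - k), s + 1)` neighbours. Conversely, every `B` has at least `D`
neighbours: the sets `T ∪ Q` with `Q` a fixed `q`-subset of `[n] \ [m]`,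
`q = min (k - s - 1) (n - m)`, and `T` any `(k - q)`-subset of `[m] \ B`. Hall's theorem then
matches `𝒢` injectively into `U`, and by cross-intersection no matched set lies in `ℱ`.
-/

open Finset

variable {α : Type*} [DecidableEq α]

def sliceMeeting (X Y : Finset α) (k t : ℕ) : Finset (Finset α) :=
  {A ∈ powersetCard k X | t ≤ #(A ∩ Y)}

theorem exists_injective_of_degree_bounds {ι β : Type*} [DecidableEq β] {G : Finset ι}
    {V : Finset β} (r : ι → β → Prop) [∀ i b, Decidable (r i b)] {D : ℕ} (hD : 0 < D)
    (hG : ∀ i ∈ G, D ≤ #(V.bipartiteAbove r i))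
    (hV : ∀ b ∈ V, #(G.bipartiteBelow r b) ≤ D) :
    ∃ f : G → β, Function.Injective f ∧ ∀ i : G, f i ∈ V.bipartiteAbove r i := by
  rw [← all_card_le_biUnion_card_iff_exists_injective]
  intro S
  set N := S.biUnion fun i => V.bipartiteAbove r i
  have hNV : N ⊆ V := biUnion_subset.mpr fun _ _ => filter_subset _ _
  have hdouble : #(S.map (Function.Embedding.subtype _)) * D ≤ #N * D := by
    refine card_mul_le_card_mul r (fun i hi => ?_) (fun b hb => ?_)
    · obtain ⟨i, hiG, hiS, rfl⟩ : ∃ j, ∃ h : j ∈ G, ⟨j, h⟩ ∈ S ∧ j = i := by simpa using hi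
      refine (hG i hiG).trans (card_le_card fun b hb => ?_)
      simp only [bipartiteAbove, mem_filter] at hb ⊢
      exact ⟨mem_biUnion.mpr ⟨_, hiS, mem_filter.mpr hb⟩, hb.2⟩
    · refine le_trans (card_le_card fun i hi => ?_) (hV b (hNV hb))
      simp only [bipartiteBelow, mem_filter, mem_map, Function.Embedding.coe_subtype] at hi ⊢
      obtain ⟨⟨j, -, rfl⟩, hr⟩ := hi
      exact ⟨j.2, hr⟩
  simpa using Nat.le_of_mul_le_mul_right hdouble hD

lemma card_bipartiteBelow_disjoint_le {Y A : Finset α} {G : Finset (Finset α)} {t : ℕ}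
    (hG : G ⊆ powersetCard t Y) : #(G.bipartiteBelow Disjoint A) ≤ (#Y - #(A ∩ Y)).choose t := by
  calc #(G.bipartiteBelow Disjoint A) ≤ #(powersetCard t (Y \ A)) := by
        refine card_le_card fun B hB => ?_
        obtain ⟨hBG, hBA⟩ := mem_filter.mp hB
        obtain ⟨hBY, hBt⟩ := mem_powersetCard.mp (hG hBG)
        exact mem_powersetCard.mpr ⟨subset_sdiff.mpr ⟨hBY, hBA⟩, hBt⟩
    _ = (#Y - #(A ∩ Y)).choose t := by rw [card_powersetCard, card_sdiff]

lemma sub_card_inter_le_of_mem_sliceMeeting {X Y A : Finset α} {k t : ℕ} (hYX : Y ⊆ X)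
    (hA : A ∈ sliceMeeting X Y k t) : #Y - #(A ∩ Y) ≤ min (#Y - t) (#X - k) := by
  obtain ⟨hAX, hAk⟩ := mem_powersetCard.mp (mem_filter.mp hA).1
  have htA := (mem_filter.mp hA).2
  have hout : #(A \ Y) ≤ #X - #Y := by
    rw [← card_sdiff_of_subset hYX]; exact card_le_card (sdiff_subset_sdiff hAX le_rfl)
  have hsplit := card_inter_add_card_sdiff A Y
  have hAY : #(A ∩ Y) ≤ #Y := card_le_card inter_subset_right
  have hYX' := card_le_card hYX
  omega

lemma choose_le_card_bipartiteAbove_disjoint {X Y B Q : Finset α} {k t : ℕ} (hYX : Y ⊆ X)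
    (hB : B ⊆ Y) (hQ : Q ⊆ X \ Y) (hQk : #Q + t ≤ k) :
    (#(Y \ B)).choose (k - #Q) ≤ #((sliceMeeting X Y k t).bipartiteAbove Disjoint B) := by
  have hQY : Disjoint Q Y := disjoint_of_subset_left hQ sdiff_disjoint
  have hdisj : ∀ T ⊆ Y \ B, Disjoint T Q :=
    fun T hT => disjoint_of_subset_left (hT.trans sdiff_subset) hQY.symm
  rw [← card_powersetCard]
  refine card_le_card_of_injOn (· ∪ Q) (fun T hT => ?_) (fun T hT T' hT' hTT' => ?_)
  · obtain ⟨hTY, hTk⟩ := mem_powersetCard.mp (mem_coe.mp hT)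
    have hTQ := hdisj T hTY
    simp only [coe_filter, bipartiteAbove, sliceMeeting, Set.mem_ofPred_eq, mem_filter,
      mem_powersetCard]
    refine ⟨⟨⟨union_subset (hTY.trans (sdiff_subset.trans hYX)) (hQ.trans sdiff_subset), ?_⟩,
      ?_⟩, ?_⟩
    · rw [card_union_of_disjoint hTQ]; omega
    · exact le_trans (by omega)
        (card_le_card (subset_inter subset_union_left (hTY.trans sdiff_subset)))
    · exact disjoint_union_right.mpr ⟨(subset_sdiff.mp hTY).2.symm,
        disjoint_of_subset_left hB hQY.symm⟩
  · rw [← union_sdiff_cancel_right (hdisj T (mem_powersetCard.mp (mem_coe.mp hT)).1),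
      ← union_sdiff_cancel_right (hdisj T' (mem_powersetCard.mp (mem_coe.mp hT')).1)]
    exact congrArg (· \ Q) hTT'

lemma choose_min_le_choose {x y k t : ℕ} (hyx : y ≤ x) (hkx : k + t ≤ x) (htk : t ≤ k) :
    (min (y - t) (x - k)).choose t ≤ (y - t).choose (k - min (k - t) (x - y)) := by
  rcases le_or_gt (k - t) (x - y) with h | h
  · rw [min_eq_left h, Nat.sub_sub_self htk]
    exact Nat.choose_le_choose t (min_le_left _ _)
  · rw [min_eq_right h.le, min_eq_right (by omega),
      ← Nat.choose_symm (show t ≤ x - k by omega), show k - (x - y) = y - t - (x - k - t) by omega,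
      Nat.choose_symm (show x - k - t ≤ y - t by omega)]
    exact Nat.choose_le_choose _ (by omega)

lemma choose_min_le_card_bipartiteAbove_disjoint {X Y B : Finset α} {k t : ℕ} (hYX : Y ⊆ X)
    (hB : B ∈ powersetCard t Y) (htk : t ≤ k) (hkX : k + t ≤ #X) :
    (min (#Y - t) (#X - k)).choose t ≤ #((sliceMeeting X Y k t).bipartiteAbove Disjoint B) := by
  obtain ⟨hBY, hBt⟩ := mem_powersetCard.mp hB
  obtain ⟨Q, hQ, hQcard⟩ : ∃ Q ⊆ X \ Y, #Q = min (k - t) (#X - #Y) :=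
    exists_subset_card_eq (by rw [card_sdiff_of_subset hYX]; exact min_le_right _ _)
  calc (min (#Y - t) (#X - k)).choose t
      ≤ (#Y - t).choose (k - min (k - t) (#X - #Y)) :=
        choose_min_le_choose (card_le_card hYX) hkX htk
    _ = (#(Y \ B)).choose (k - #Q) := by rw [card_sdiff_of_subset hBY, hBt, hQcard]
    _ ≤ _ := choose_le_card_bipartiteAbove_disjoint hYX hBY hQ (by omega)

theorem card_add_card_le_card_sliceMeeting {X Y : Finset α} {k t : ℕ} (hYX : Y ⊆ X)
    (htk : t ≤ k) (hkX : k + t ≤ #X) (htY : 2 * t ≤ #Y) {F G : Finset (Finset α)}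
    (hF : F ⊆ sliceMeeting X Y k t) (hG : G ⊆ powersetCard t Y)
    (hcross : ∀ A ∈ F, ∀ B ∈ G, ¬ Disjoint A B) :
    #F + #G ≤ #(sliceMeeting X Y k t) := by
  obtain ⟨f, hf_inj, hf⟩ := exists_injective_of_degree_bounds Disjoint
    (Nat.choose_pos (show t ≤ min (#Y - t) (#X - k) by omega))
    (fun B hB => choose_min_le_card_bipartiteAbove_disjoint hYX (hG hB) htk hkX)
    (fun A hA => (card_bipartiteBelow_disjoint_le hG).trans
      (Nat.choose_le_choose t (sub_card_inter_le_of_mem_sliceMeeting hYX hA)))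
  have hfU : univ.image f ⊆ sliceMeeting X Y k t \ F := by
    intro A hA
    obtain ⟨B, -, rfl⟩ := mem_image.mp hA
    obtain ⟨hfB, hBf⟩ := mem_filter.mp (hf B)
    exact mem_sdiff.mpr ⟨hfB, fun hF => hcross _ hF B B.2 hBf.symm⟩
  have := card_le_card hfU
  rw [card_image_of_injective _ hf_inj, card_univ, Fintype.card_coe,
    card_sdiff_of_subset hF] at this
  have := card_le_card hF
  omega

lemma choose_mul_choose_le_card_filter_card_inter_eq {X Y : Finset α} {i k : ℕ} (hYX : Y ⊆ X)
    (hik : i ≤ k) :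
    (#Y).choose i * (#X - #Y).choose (k - i) ≤ #{A ∈ powersetCard k X | #(A ∩ Y) = i} := by
  rw [← card_sdiff_of_subset hYX, ← card_powersetCard, ← card_powersetCard, ← card_product]
  have key : ∀ T Q, T ⊆ Y → Q ⊆ X \ Y → Disjoint T Q ∧ (T ∪ Q) ∩ Y = T := by
    intro T Q hTY hQ
    have hQY : Disjoint Q Y := disjoint_of_subset_left hQ sdiff_disjoint
    refine ⟨disjoint_of_subset_left hTY hQY.symm, ?_⟩
    rw [union_inter_distrib_right, inter_eq_left.mpr hTY, disjoint_iff_inter_eq_empty.mp hQY,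
      union_empty]
  refine card_le_card_of_injOn (fun p => p.1 ∪ p.2) (fun ⟨T, Q⟩ hp => ?_)
    (fun ⟨T, Q⟩ hp ⟨T', Q'⟩ hp' hTQ => ?_)
  · simp only [mem_coe, mem_product, mem_powersetCard] at hp
    obtain ⟨⟨hTY, hTi⟩, hQ, hQk⟩ := hp
    obtain ⟨hdisj, hY⟩ := key T Q hTY hQ
    refine mem_filter.mpr ⟨mem_powersetCard.mpr ⟨union_subset (hTY.trans hYX)
      (hQ.trans sdiff_subset), ?_⟩, by rw [hY, hTi]⟩
    rw [card_union_of_disjoint hdisj]; omega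
  · simp only [mem_coe, mem_product, mem_powersetCard] at hp hp'
    replace hTQ : T ∪ Q = T' ∪ Q' := hTQ
    obtain ⟨hdisj, hY⟩ := key T Q hp.1.1 hp.2.1
    obtain ⟨hdisj', hY'⟩ := key T' Q' hp'.1.1 hp'.2.1
    have hT : T = T' := by rw [← hY, ← hY', hTQ]
    subst hT
    rw [Prod.mk.injEq, ← union_sdiff_cancel_left hdisj, ← union_sdiff_cancel_left hdisj', hTQ]
    exact ⟨rfl, rfl⟩

lemma card_sliceMeeting_add_sum_le {X Y : Finset α} {k t : ℕ} (hYX : Y ⊆ X) (htk : t ≤ k) :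
    #(sliceMeeting X Y k t) + ∑ i ∈ range t, (#Y).choose i * (#X - #Y).choose (k - i) ≤
      (#X).choose k := by
  calc #(sliceMeeting X Y k t) + ∑ i ∈ range t, (#Y).choose i * (#X - #Y).choose (k - i)
      ≤ #(sliceMeeting X Y k t) + ∑ i ∈ range t, #{A ∈ powersetCard k X | #(A ∩ Y) = i} := by
        gcongr with i hi
        exact choose_mul_choose_le_card_filter_card_inter_eq hYX (by have := mem_range.mp hi; omega)
    _ = #(powersetCard k X) := by
        rw [sum_card_fiberwise_eq_card_filter, ← card_filter_add_card_filter_not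
          (s := powersetCard k X) (fun A => t ≤ #(A ∩ Y))]
        simp only [sliceMeeting, mem_range, not_le]
    _ = (#X).choose k := card_powersetCard _ _

lemma inter_Icc_eq_inter_Icc_min {A : Finset ℕ} {n : ℕ} (m : ℕ) (hA : A ⊆ Icc 1 n) :
    A ∩ Icc 1 m = A ∩ Icc 1 (min n m) := by
  ext x
  have hxn : x ∈ A → x ≤ n := fun hx => (mem_Icc.mp (hA hx)).2
  simp only [mem_inter, mem_Icc, le_min_iff]
  grind

lemma choose_mul_choose_le_min {i k : ℕ} (n m : ℕ) (hik : i < k) :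
    m.choose i * (n - m).choose (k - i) ≤ (min n m).choose i * (n - min n m).choose (k - i) := by
  rcases le_total m n with h | h
  · rw [min_eq_right h]
  · rw [Nat.sub_eq_zero_of_le h, Nat.choose_eq_zero_of_lt (show 0 < k - i by omega), mul_zero]
    exact Nat.zero_le _

theorem restricted_universe_bound_small
    (s k n m : ℕ) (hk : s + 1 ≤ k) (hn : k + s < n) (hm : 2 * s + 1 < m)
    (F G : Finset (Finset ℕ))
    (hF : ∀ A ∈ F, A ∈ powersetCard k (Icc 1 n) ∧ s + 1 ≤ (A ∩ Icc 1 m).card)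
    (hG : ∀ B ∈ G, B ∈ powersetCard (s + 1) (Icc 1 n) ∧ s + 1 ≤ (B ∩ Icc 1 m).card)
    (hcross : ∀ A ∈ F, ∀ B ∈ G, (A ∩ B).Nonempty) :
    F.card + G.card ≤
      Nat.choose n k
        - ∑ i ∈ Finset.range (s + 1),
            Nat.choose m i * Nat.choose (n - m) (k - i) := by
  have hYX : Icc 1 (min n m) ⊆ Icc 1 n := Icc_subset_Icc_right (min_le_left n m)
  have hFU : F ⊆ sliceMeeting (Icc 1 n) (Icc 1 (min n m)) k (s + 1) := fun A hA =>
    mem_filter.mpr ⟨(hF A hA).1,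
      inter_Icc_eq_inter_Icc_min m (mem_powersetCard.mp (hF A hA).1).1 ▸ (hF A hA).2⟩
  have hGY : G ⊆ powersetCard (s + 1) (Icc 1 (min n m)) := fun B hB => by
    obtain ⟨hBX, hBcard⟩ := mem_powersetCard.mp (hG B hB).1
    have hBm := inter_Icc_eq_inter_Icc_min m hBX ▸ (hG B hB).2
    exact mem_powersetCard.mpr
      ⟨inter_eq_left.mp (eq_of_subset_of_card_le inter_subset_left (hBcard ▸ hBm)), hBcard⟩
  have hmain := card_add_card_le_card_sliceMeeting hYX hk (by simp; omega) (by simp; omega) hFU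
    hGY fun A hA B hB => not_disjoint_iff_nonempty_inter.mpr (hcross A hA B hB)
  have hcompl := card_sliceMeeting_add_sum_le hYX hk
  have hsum : ∑ i ∈ range (s + 1), m.choose i * (n - m).choose (k - i) ≤
      ∑ i ∈ range (s + 1), (min n m).choose i * (n - min n m).choose (k - i) :=
    sum_le_sum fun i hi => choose_mul_choose_le_min n m (by have := mem_range.mp hi; omega)
  simp only [Nat.card_Icc, Nat.add_sub_cancel] at hcompl
  omega
end

section
/- Let t, k, n be integers with t ≥ 0, k ≥ 1 and n ≥ 2k+t. Let ℱ ⊆ C([n], k+t) and 𝒢 ⊆ C([n], k) be shifted cross-intersecting families. Then the families ℱ(n) = {F \ {n} : n ∈ F ∈ ℱ} and 𝒢(n) = {G \ {n} : n ∈ G ∈ 𝒢} are cross-intersecting. -/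
open Finset

theorem shifted_cross_intersecting_link
    (t k n : ℕ) (hk : 1 ≤ k) (hn : 2 * k + t ≤ n)
    (F G : Finset (Finset ℕ))
    (hF : F ⊆ powersetCard (k + t) (Icc 1 n))
    (hG : G ⊆ powersetCard k (Icc 1 n))
    (hFshift : ∀ A ∈ F, ∀ i j : ℕ, 1 ≤ i → i < j → i ∉ A → j ∈ A →
      insert i (A.erase j) ∈ F)
    (hGshift : ∀ B ∈ G, ∀ i j : ℕ, 1 ≤ i → i < j → i ∉ B → j ∈ B →
      insert i (B.erase j) ∈ G)
    (hcross : ∀ A ∈ F, ∀ B ∈ G, (A ∩ B).Nonempty) :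
    ∀ A ∈ (F.filter (fun A => n ∈ A)).image (fun A => A.erase n),
      ∀ B ∈ (G.filter (fun B => n ∈ B)).image (fun B => B.erase n),
        (A ∩ B).Nonempty := by
  intro A' hA' B' hB'
  obtain ⟨A, hAmem, rfl⟩ := mem_image.mp hA'
  obtain ⟨B, hBmem, rfl⟩ := mem_image.mp hB'
  rw [mem_filter] at hAmem hBmem
  obtain ⟨hA, hnA⟩ := hAmem
  obtain ⟨hB, hnB⟩ := hBmem
  have hApc := mem_powersetCard.mp (hF hA)
  have hBpc := mem_powersetCard.mp (hG hB)
  -- find j ∈ Icc 1 (n-1) not in A ∪ B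
  have hkt1 : 1 ≤ 2 * k + t := by omega
  have hn1 : 1 ≤ n := le_trans hkt1 hn
  have hnotsub : ¬ (Icc 1 n ⊆ A ∪ B) := by
    intro hsub
    have h1 : (Icc 1 n).card ≤ (A ∪ B).card := card_le_card hsub
    have h2 : (A ∪ B).card + (A ∩ B).card = A.card + B.card :=
      card_union_add_card_inter A B
    have h3 : 1 ≤ (A ∩ B).card := by
      refine card_pos.mpr ⟨n, ?_⟩
      exact mem_inter.mpr ⟨hnA, hnB⟩
    rw [Nat.card_Icc] at h1
    omega
  obtain ⟨j, hjIcc, hjAB⟩ := not_subset.mp hnotsub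
  rw [mem_Icc] at hjIcc
  rw [mem_union] at hjAB
  push_neg at hjAB
  have hjn : j < n := by
    rcases lt_or_eq_of_le hjIcc.2 with h | h
    · exact h
    · exact absurd (h ▸ hnB) hjAB.2
  have hB' : insert j (B.erase n) ∈ G := hGshift B hB j n hjIcc.1 hjn hjAB.2 hnB
  obtain ⟨x, hx⟩ := hcross A hA (insert j (B.erase n)) hB'
  rw [mem_inter, mem_insert] at hx
  obtain ⟨hxA, hxB⟩ := hx
  have hxne : x ≠ j := fun h => hjAB.1 (h ▸ hxA)
  have hxBe : x ∈ B.erase n := hxB.resolve_left hxne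
  refine ⟨x, mem_inter.mpr ⟨?_, hxBe⟩⟩
  exact mem_erase.mpr ⟨(mem_erase.mp hxBe).1, hxA⟩
end

section
/- Let ℓ, t, k, n be integers with ℓ ≥ t ≥ 0, k ≥ 1 and n > 2k+t. Let ℱ ⊆ C([n], k+t) and 𝒢 ⊆ C([n], k) be shifted cross-intersecting families. If ℱ is ℓ-intersecting, then ℱ(n) = {F \ {n} : n ∈ F ∈ ℱ} is ℓ-intersecting. -/
open Finset

theorem shifted_link_intersecting
    (l t k n : ℕ) (htl : t ≤ l) (hk : 1 ≤ k) (hn : 2 * k + t < n)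
    (F G : Finset (Finset ℕ))
    (hF : F ⊆ powersetCard (k + t) (Icc 1 n))
    (hG : G ⊆ powersetCard k (Icc 1 n))
    (hFshift : ∀ A ∈ F, ∀ i j : ℕ, 1 ≤ i → i < j → i ∉ A → j ∈ A →
      insert i (A.erase j) ∈ F)
    (hGshift : ∀ B ∈ G, ∀ i j : ℕ, 1 ≤ i → i < j → i ∉ B → j ∈ B →
      insert i (B.erase j) ∈ G)
    (hcross : ∀ A ∈ F, ∀ B ∈ G, (A ∩ B).Nonempty)
    (hint : ∀ A ∈ F, ∀ A' ∈ F, l ≤ (A ∩ A').card) :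
    ∀ A ∈ (F.filter (fun A => n ∈ A)).image (fun A => A.erase n),
      ∀ A' ∈ (F.filter (fun A => n ∈ A)).image (fun A => A.erase n),
        l ≤ (A ∩ A').card := by
  intro A hA A' hA'
  rcases mem_image.1 hA with ⟨A0, hA0, rfl⟩
  rcases mem_image.1 hA' with ⟨A1, hA1, rfl⟩
  rcases mem_filter.1 hA0 with ⟨hA0F, hnA0⟩
  rcases mem_filter.1 hA1 with ⟨hA1F, hnA1⟩
  obtain ⟨hA0sub, hA0card⟩ := mem_powersetCard.1 (hF hA0F)
  obtain ⟨hA1sub, hA1card⟩ := mem_powersetCard.1 (hF hA1F)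
  -- find a fresh element i
  have hunion : (A0 ∪ A1).card < (Icc 1 n).card := by
    have h1 : (A0 ∪ A1).card + (A0 ∩ A1).card = A0.card + A1.card :=
      card_union_add_card_inter A0 A1
    have h2 : l ≤ (A0 ∩ A1).card := hint A0 hA0F A1 hA1F
    have h3 : (Icc 1 n).card = n := Nat.card_Icc 1 n ▸ by omega
    omega
  have hne : ((Icc 1 n) \ (A0 ∪ A1)).Nonempty := by
    rw [← card_pos, card_sdiff_of_subset (union_subset hA0sub hA1sub)]
    omega
  obtain ⟨i, hi⟩ := hne
  obtain ⟨hiIcc, hiU⟩ := mem_sdiff.1 hi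
  have hiA0 : i ∉ A0 := fun h => hiU (mem_union_left _ h)
  have hiA1 : i ∉ A1 := fun h => hiU (mem_union_right _ h)
  obtain ⟨hi1, hin⟩ := mem_Icc.1 hiIcc
  have hilt : i < n := lt_of_le_of_ne hin (fun h => hiA0 (h ▸ hnA0))
  have hshifted : insert i (A0.erase n) ∈ F := hFshift A0 hA0F i n hi1 hilt hiA0 hnA0
  have key : l ≤ ((insert i (A0.erase n)) ∩ A1).card := hint _ hshifted _ hA1F
  have heq : (insert i (A0.erase n)) ∩ A1 = A0.erase n ∩ A1.erase n := by
    ext x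
    simp only [mem_inter, mem_insert, mem_erase]
    constructor
    · rintro ⟨hx1, hx2⟩
      rcases hx1 with rfl | ⟨hxn, hxA0⟩
      · exact absurd hx2 hiA1
      · exact ⟨⟨hxn, hxA0⟩, hxn, hx2⟩
    · rintro ⟨⟨hxn, hxA0⟩, _, hxA1⟩
      exact ⟨Or.inr ⟨hxn, hxA0⟩, hxA1⟩
  rwa [heq] at key
end

section
/- Let t, s, k, n be integers with t ≥ 0, s ≥ 0, k ≥ s+1 and n ≥ 2k+t. Let ℱ ⊆ C([n], k+t) and 𝒢 ⊆ C([n], k) be cross-intersecting families such that ℱ is (t+1)-intersecting and C([k+t+s], k+t) ⊆ ℱ. Then every F ∈ ℱ satisfies |F ∩ [k+t+s]| ≥ t+s+1 and every G ∈ 𝒢 satisfies |G ∩ [k+t+s]| ≥ s+1. -/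
open Finset

/-!
Write `I = [k+t+s]`. A set `X` meeting `I` in few points leaves a large part `I \ X`, so some
`(k+t)`-subset of `I` — a member of `ℱ` — can be packed into `I \ X` as far as possible and meets `X`
in at most `k + t - |I \ X|` points. For `X ∈ ℱ` this must be at least `t + 1`, for `X ∈ 𝒢` at
least `1`.
-/

-- `r - #(S \ X)` is truncated: it is `0` once `S \ X` has at least `r` points.
theorem exists_mem_powersetCard_card_inter_le {α : Type*} [DecidableEq α] {S X : Finset α}
    {r : ℕ} (hr : r ≤ #S) : ∃ A ∈ powersetCard r S, #(X ∩ A) ≤ r - #(S \ X) := by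
  obtain ⟨B, hBX, hBcard⟩ := exists_subset_card_eq (min_le_right r #(S \ X))
  obtain ⟨A, hBA, hAS, hAcard⟩ :=
    exists_subsuperset_card_eq (hBX.trans sdiff_subset) (hBcard ▸ min_le_left r _) hr
  refine ⟨A, mem_powersetCard.2 ⟨hAS, hAcard⟩, ?_⟩
  have hXA : X ∩ A ⊆ A \ B := fun x hx =>
    mem_sdiff.2 ⟨(mem_inter.1 hx).2, fun hxB => (mem_sdiff.1 (hBX hxB)).2 (mem_inter.1 hx).1⟩
  calc #(X ∩ A) ≤ #(A \ B) := card_le_card hXA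
    _ = r - #(S \ X) := by rw [card_sdiff_of_subset hBA, hAcard, hBcard]; omega

theorem intersection_with_initial_segment_general
    (t s k : ℕ)
    (F G : Finset (Finset ℕ))
    (hcross : ∀ A ∈ F, ∀ B ∈ G, (A ∩ B).Nonempty)
    (hint : ∀ A ∈ F, ∀ A' ∈ F, t + 1 ≤ (A ∩ A').card)
    (hsub : powersetCard (k + t) (Icc 1 (k + t + s)) ⊆ F) :
    (∀ A ∈ F, t + s + 1 ≤ (A ∩ Icc 1 (k + t + s)).card) ∧
      (∀ B ∈ G, s + 1 ≤ (B ∩ Icc 1 (k + t + s)).card) := by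
  set I := Icc 1 (k + t + s)
  have hI : k + t ≤ #I := by simp [I]
  have hsplit : ∀ X : Finset ℕ, #(I \ X) + #(X ∩ I) = k + t + s := fun X => by
    rw [inter_comm, card_sdiff_add_card_inter]; simp [I]
  constructor
  · intro A hA
    obtain ⟨A', hA'I, hAA'⟩ := exists_mem_powersetCard_card_inter_le (X := A) hI
    have := hint A hA A' (hsub hA'I)
    have := hsplit A
    omega
  · intro B hB
    obtain ⟨A, hAI, hBA⟩ := exists_mem_powersetCard_card_inter_le (X := B) hI
    have := card_pos.2 (inter_comm A B ▸ hcross A (hsub hAI) B hB)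
    have := hsplit B
    omega

theorem intersection_with_initial_segment
    (t s k n : ℕ) (hk : s + 1 ≤ k) (hn : 2 * k + t ≤ n)
    (F G : Finset (Finset ℕ))
    (hF : F ⊆ powersetCard (k + t) (Icc 1 n))
    (hG : G ⊆ powersetCard k (Icc 1 n))
    (hcross : ∀ A ∈ F, ∀ B ∈ G, (A ∩ B).Nonempty)
    (hint : ∀ A ∈ F, ∀ A' ∈ F, t + 1 ≤ (A ∩ A').card)
    (hsub : powersetCard (k + t) (Icc 1 (k + t + s)) ⊆ F) :
    (∀ A ∈ F, t + s + 1 ≤ (A ∩ Icc 1 (k + t + s)).card) ∧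
      (∀ B ∈ G, s + 1 ≤ (B ∩ Icc 1 (k + t + s)).card) :=
  intersection_with_initial_segment_general t s k F G hcross hint hsub
end

section
/- Let s, k, ℓ, n be integers with s ≥ 0, k ≥ ℓ ≥ s+1 and n ≥ k+ℓ. Let ℱ ⊆ C([n], k) and 𝒢 ⊆ C([n], ℓ) be cross-intersecting families such that 𝒢 is intersecting and C([ℓ+s], ℓ) ⊆ 𝒢. Then every F ∈ ℱ satisfies |F ∩ [ℓ+s]| ≥ s+1 and every G ∈ 𝒢 satisfies |G ∩ [ℓ+s]| ≥ s+1. -/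
open Finset

lemma key_aux (s l : ℕ) (X : Finset ℕ) (G : Finset (Finset ℕ))
    (hsub : powersetCard l (Icc 1 (l + s)) ⊆ G)
    (hint : ∀ B ∈ G, (X ∩ B).Nonempty) :
    s + 1 ≤ (X ∩ Icc 1 (l + s)).card := by
  by_contra h
  push_neg at h
  have hcard : (X ∩ Icc 1 (l + s)).card ≤ s := Nat.lt_succ_iff.mp h
  set M := Icc 1 (l + s) with hM
  have hMcard : M.card = l + s := by simp [hM]
  have hdiff : l ≤ (M \ X).card := by
    have h1 : (M ∩ X).card + (M \ X).card = M.card := card_inter_add_card_sdiff M X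
    rw [inter_comm] at h1
    omega
  obtain ⟨B', hB'sub, hB'card⟩ := exists_subset_card_eq hdiff
  have hB'G : B' ∈ G := hsub (mem_powersetCard.mpr ⟨hB'sub.trans sdiff_subset, hB'card⟩)
  obtain ⟨x, hx⟩ := hint B' hB'G
  rw [mem_inter] at hx
  exact (mem_sdiff.mp (hB'sub hx.2)).2 hx.1

theorem intersection_with_initial_segment'
    (s k l n : ℕ) (hs : s + 1 ≤ l) (hlk : l ≤ k) (hn : k + l ≤ n)
    (F G : Finset (Finset ℕ))
    (hF : F ⊆ powersetCard k (Icc 1 n))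
    (hG : G ⊆ powersetCard l (Icc 1 n))
    (hcross : ∀ A ∈ F, ∀ B ∈ G, (A ∩ B).Nonempty)
    (hGint : ∀ B ∈ G, ∀ B' ∈ G, (B ∩ B').Nonempty)
    (hsub : powersetCard l (Icc 1 (l + s)) ⊆ G) :
    (∀ A ∈ F, s + 1 ≤ (A ∩ Icc 1 (l + s)).card) ∧
      (∀ B ∈ G, s + 1 ≤ (B ∩ Icc 1 (l + s)).card) := by
  constructor
  · exact fun A hA => key_aux s l A G hsub (fun B hB => hcross A hA B hB)
  · exact fun B hB => key_aux s l B G hsub (fun B' hB' => hGint B hB B' hB')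
end

section
/- Let t, k, n be integers with t ≥ 0, k ≥ 1 and n ≥ 2k+t. Let ℱ ⊆ C([n], k+t) and 𝒢 ⊆ C([n], k) be cross-intersecting families. If ℱ is t-intersecting, then |ℱ| + |𝒢| ≤ C(n, k). -/
/-!
Pass to complements: the sets `[n] \ F`, `F ∈ ℱ`, form a `τ`-intersecting family `𝒜` with
`τ = n - 2k - t`, and every member of its `τ`-th shadow `∂^τ 𝒜` is a `k`-set disjoint from some
`F ∈ ℱ`, hence not in `𝒢`. So the theorem follows from Katona's intersecting shadow theorem
`|𝒜| ≤ |∂^τ 𝒜|`.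

Katona's theorem is proved by shifting. A UV-compression along `{a}, {b}` with `a < b` keeps the
size of `𝒜` and its `τ`-intersection and does not enlarge `∂^τ 𝒜`, so we may assume `𝒜` is
shifted. Then (Frankl) every `A ∈ 𝒜` has a least `i` with `|A ∩ [0, τ + 2i)| ≥ τ + i`: otherwise
some left shift of `A` meets `A` in fewer than `τ` elements. The map `A ↦ A ∆ [0, τ + 2i)` is an
injection of `𝒜` into `∂^τ 𝒜`.
-/

open Finset
open scoped FinsetFamily symmDiff

theorem Nat.exists_le_eq_of_map_add_one_le {f : ℕ → ℕ} (hf : ∀ v, f (v + 1) ≤ f v + 1)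
    {j N : ℕ} (h0 : f 0 ≤ j) (hN : j ≤ f N) : ∃ w ≤ N, f w = j := by
  induction N with
  | zero => exact ⟨0, le_rfl, by omega⟩
  | succ N ih =>
    by_cases h : j ≤ f N
    · obtain ⟨w, hw, hfw⟩ := ih h
      exact ⟨w, by omega, hfw⟩
    · exact ⟨N + 1, le_rfl, by have := hf N; omega⟩

namespace Finset

section General

variable {α : Type*} [DecidableEq α]

def IsTIntersecting (t : ℕ) (𝒜 : Finset (Finset α)) : Prop :=
  ∀ A ∈ 𝒜, ∀ B ∈ 𝒜, t ≤ #(A ∩ B)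

lemma card_insert_erase {a b : α} {X : Finset α} (ha : a ∉ X) (hb : b ∈ X) :
    #(insert a (X.erase b)) = #X := by
  rw [card_insert_of_notMem (fun h ↦ ha (mem_of_mem_erase h)), card_erase_add_one hb]

lemma card_symmDiff_add_two_mul_card_inter (s t : Finset α) :
    #(s ∆ t) + 2 * #(s ∩ t) = #s + #t := by
  rw [Finset.symmDiff_def, card_union_of_disjoint disjoint_sdiff_sdiff]
  have := card_sdiff_add_card_inter s t
  have := card_sdiff_add_card_inter t s
  rw [inter_comm] at this
  omega

end General

section InitialSegments

variable (A : Finset ℕ) (v : ℕ)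

lemma card_inter_range_le : #(A ∩ range v) ≤ v :=
  (card_le_card inter_subset_right).trans (card_range v).le

lemma card_inter_range_mono {v w : ℕ} (h : v ≤ w) : #(A ∩ range v) ≤ #(A ∩ range w) :=
  card_le_card (inter_subset_inter_left (range_subset_range.2 h))

lemma card_inter_range_add_one_le : #(A ∩ range (v + 1)) ≤ #(A ∩ range v) + 1 := by
  rw [range_add_one]
  by_cases hv : v ∈ A
  · rw [inter_insert_of_mem hv]
    exact card_insert_le _ _
  · rw [inter_insert_of_notMem hv]
    exact Nat.le_succ _

lemma card_range_sdiff_add_card_inter_range : #(range v \ A) + #(A ∩ range v) = v := by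
  rw [inter_comm, card_sdiff_add_card_inter, card_range]

lemma card_inter_range_union_sdiff_inter_range (p q : ℕ) :
    #((A ∩ range p ∪ range q \ A) ∩ range v) =
      #(A ∩ range (min p v)) + #(range (min q v) \ A) := by
  have hdisj : Disjoint (A ∩ range p ∩ range v) (range q \ A ∩ range v) :=
    disjoint_left.2 fun x hx hx' ↦ by
      simp only [mem_inter, mem_sdiff] at hx hx'
      exact hx'.1.2 hx.1.1
  rw [union_inter_distrib_right, card_union_of_disjoint hdisj, inter_assoc, range_inter_range,
    sdiff_inter_right_comm, range_inter_range]

lemma symmDiff_range_inter_range {u d : ℕ} (hud : u ≤ d) :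
    A ∆ range d ∩ range u = range u \ A := by
  ext x
  simp only [mem_inter, mem_symmDiff, mem_range, mem_sdiff]
  grind

variable {A}

lemma exists_card_inter_range_eq {N j : ℕ} (hj : j ≤ #(A ∩ range N)) :
    ∃ w ≤ N, #(A ∩ range w) = j :=
  Nat.exists_le_eq_of_map_add_one_le (card_inter_range_add_one_le A) (by simp) hj

lemma exists_card_range_sdiff_eq (j : ℕ) : ∃ q, #(range q \ A) = j := by
  have hstep (v : ℕ) : #(range (v + 1) \ A) ≤ #(range v \ A) + 1 := by
    have := card_range_sdiff_add_card_inter_range A v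
    have := card_range_sdiff_add_card_inter_range A (v + 1)
    have := card_inter_range_mono A (Nat.le_add_right v 1)
    omega
  have hlarge : j ≤ #(range (j + #A) \ A) := by
    have := card_range_sdiff_add_card_inter_range A (j + #A)
    have : #(A ∩ range (j + #A)) ≤ #A := card_le_card inter_subset_left
    omega
  obtain ⟨q, -, hq⟩ :=
    Nat.exists_le_eq_of_map_add_one_le (f := fun q ↦ #(range q \ A)) hstep (by simp) hlarge
  exact ⟨q, hq⟩

end InitialSegments

end Finset

namespace UV

variable {α : Type*} [DecidableEq α]

lemma compress_singleton (a b : α) (X : Finset α) :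
    compress {a} {b} X = if a ∉ X ∧ b ∈ X then insert a (X.erase b) else X := by
  unfold compress
  simp only [disjoint_singleton_left, singleton_subset_iff]
  split_ifs with h
  · ext x
    simp only [sup_eq_union, mem_sdiff, mem_union, mem_singleton, mem_insert, mem_erase]
    grind
  · rfl

variable {a b : α} {X Y : Finset α}

lemma card_inter_le_card_insert_erase_inter (ha : a ∉ X) (hb : b ∈ X) (hY : b ∈ Y → a ∈ Y) :
    #(X ∩ Y) ≤ #(insert a (X.erase b) ∩ Y) := by
  by_cases hbY : b ∈ Y
  · calc #(X ∩ Y) = #(insert a ((X ∩ Y).erase b)) :=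
          (card_insert_erase (fun h ↦ ha (mem_inter.1 h).1) (mem_inter.2 ⟨hb, hbY⟩)).symm
      _ ≤ #(insert a (X.erase b) ∩ Y) := card_le_card fun x ↦ by
          simp only [mem_insert, mem_erase, mem_inter]; grind
  · exact card_le_card fun x ↦ by simp only [mem_insert, mem_erase, mem_inter]; grind

lemma card_inter_le_card_compress_inter (X Y : Finset α) :
    #(X ∩ Y) ≤ #(compress {a} {b} X ∩ compress {a} {b} Y) := by
  simp only [compress_singleton]
  split_ifs with hX hY hY
  · have : insert a (X.erase b) ∩ insert a (Y.erase b) = insert a ((X ∩ Y).erase b) := by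
      ext x; simp only [mem_insert, mem_erase, mem_inter]; grind
    rw [this, card_insert_erase (fun h ↦ hX.1 (mem_inter.1 h).1) (mem_inter.2 ⟨hX.2, hY.2⟩)]
  · exact card_inter_le_card_insert_erase_inter hX.1 hX.2 (by tauto)
  · rw [inter_comm, inter_comm X]
    exact card_inter_le_card_insert_erase_inter hY.1 hY.2 (by tauto)
  · exact le_rfl

lemma compress_inter_eq_inter_compress (hX : a ∉ X ∧ b ∈ X) (hY : a ∉ Y ∧ b ∈ Y) :
    compress {a} {b} X ∩ Y = X ∩ compress {a} {b} Y := by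
  rw [compress_singleton, compress_singleton, if_pos hX, if_pos hY]
  ext x; simp only [mem_insert, mem_erase, mem_inter]; grind

variable {t : ℕ} {𝒜 : Finset (Finset α)}

lemma _root_.Finset.IsTIntersecting.le_card_compress_inter (h : IsTIntersecting t 𝒜)
    (hX : X ∈ 𝒜) (hY : Y ∈ 𝒜) (hCY : compress {a} {b} Y ∈ 𝒜) :
    t ≤ #(compress {a} {b} X ∩ Y) := by
  by_cases hYm : a ∉ Y ∧ b ∈ Y
  · by_cases hXm : a ∉ X ∧ b ∈ X
    · rw [compress_inter_eq_inter_compress hXm hYm]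
      exact h X hX _ hCY
    · rw [compress_singleton, if_neg hXm]
      exact h X hX Y hY
  · calc t ≤ #(X ∩ Y) := h X hX Y hY
      _ ≤ #(compress {a} {b} X ∩ compress {a} {b} Y) := card_inter_le_card_compress_inter X Y
      _ = #(compress {a} {b} X ∩ Y) := by rw [compress_singleton a b Y, if_neg hYm]

lemma _root_.Finset.IsTIntersecting.uvCompression (h : IsTIntersecting t 𝒜) :
    IsTIntersecting t (𝓒 {a} {b} 𝒜) := by
  intro X' hX' Y' hY'
  rcases mem_compression.1 hX' with ⟨hX, hCX⟩ | ⟨-, X, hX, rfl⟩ <;>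
    rcases mem_compression.1 hY' with ⟨hY, hCY⟩ | ⟨-, Y, hY, rfl⟩
  · exact h X' hX Y' hY
  · rw [inter_comm]
    exact h.le_card_compress_inter hY hX hCX
  · exact h.le_card_compress_inter hX hY hCY
  · exact (h X hX Y hY).trans (card_inter_le_card_compress_inter X Y)

lemma shadow_iterate_compression_subset (a b : α) (𝒜 : Finset (Finset α)) (k : ℕ) :
    ∂^[k] (𝓒 {a} {b} 𝒜) ⊆ 𝓒 {a} {b} (∂^[k] 𝒜) := by
  induction k with
  | zero => exact Subset.rfl
  | succ k ih =>
    rw [Function.iterate_succ_apply', Function.iterate_succ_apply']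
    refine (shadow_mono ih).trans (shadow_compression_subset_compression_shadow _ _ ?_)
    simpa using isCompressed_self ∅ _

lemma card_shadow_iterate_compression_le (a b : α) (𝒜 : Finset (Finset α)) (k : ℕ) :
    #(∂^[k] (𝓒 {a} {b} 𝒜)) ≤ #(∂^[k] 𝒜) :=
  (card_le_card (shadow_iterate_compression_subset a b 𝒜 k)).trans (card_compression _ _ _).le

lemma sum_sum_compression_lt {a b : ℕ} (hab : a < b) {𝒜 : Finset (Finset ℕ)}
    (h : 𝓒 {a} {b} 𝒜 ≠ 𝒜) :
    ∑ A ∈ 𝓒 {a} {b} 𝒜, ∑ x ∈ A, x < ∑ A ∈ 𝒜, ∑ x ∈ A, x := by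
  have hmoved : ∀ A ∈ {A ∈ 𝒜 | compress {a} {b} A ∉ 𝒜},
      ∑ x ∈ compress {a} {b} A, x < ∑ x ∈ A, x := by
    intro A hA
    rw [mem_filter, compress_singleton] at hA
    rw [compress_singleton]
    split_ifs at hA ⊢ with hm
    · rw [sum_insert (fun h ↦ hm.1 (mem_of_mem_erase h)), ← sum_erase_add _ _ hm.2]
      omega
    · exact absurd hA.1 hA.2
  have hne : {A ∈ 𝒜 | compress {a} {b} A ∉ 𝒜}.Nonempty := by
    contrapose! h
    rw [compression, filter_image, h, image_empty, union_empty, filter_eq_self]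
    simpa [filter_eq_empty_iff] using h
  rw [compression, sum_union compress_disjoint]
  conv_rhs => rw [← filter_union_filter_not_eq (fun A ↦ compress {a} {b} A ∈ 𝒜) 𝒜]
  rw [sum_union (disjoint_filter_filter_not _ _ _), add_lt_add_iff_left, filter_image,
    sum_image compress_injOn]
  exact sum_lt_sum_of_nonempty hne hmoved

end UV

namespace Finset

def IsShifted (𝒜 : Finset (Finset ℕ)) : Prop :=
  ∀ ⦃a b : ℕ⦄, a < b → UV.IsCompressed {a} {b} 𝒜

section Shifted

variable {𝒜 : Finset (Finset ℕ)} {τ : ℕ} {A B : Finset ℕ}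

lemma IsShifted.insert_erase_mem (h : IsShifted 𝒜) {a b : ℕ} (hab : a < b) (hA : A ∈ 𝒜)
    (ha : a ∉ A) (hb : b ∈ A) : insert a (A.erase b) ∈ 𝒜 := by
  have := UV.compress_mem_compression (u := {a}) (v := {b}) hA
  rwa [(h hab).eq, UV.compress_singleton, if_pos ⟨ha, hb⟩] at this

lemma card_inter_range_insert_erase_le {a b : ℕ} (hba : b < a) (haA : a ∈ A) (hbA : b ∉ A)
    (hbB : b ∈ B) (hAa : ∀ x ∈ A, x < a → x ∈ B) (hB : ∀ v, #(A ∩ range v) ≤ #(B ∩ range v))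
    (v : ℕ) : #(insert b (A.erase a) ∩ range v) ≤ #(B ∩ range v) := by
  by_cases hv : v ≤ a
  · refine card_le_card fun x hx ↦ ?_
    simp only [mem_inter, mem_insert, mem_erase, mem_range] at hx ⊢
    rcases hx with ⟨rfl | ⟨-, hxA⟩, hxv⟩
    · exact ⟨hbB, hxv⟩
    · exact ⟨hAa x hxA (by omega), hxv⟩
  · have : insert b (A.erase a) ∩ range v = insert b ((A ∩ range v).erase a) := by
      ext x; simp only [mem_inter, mem_insert, mem_erase, mem_range]; grind
    rw [this, card_insert_erase (by simp [hbA]) (by simp [haA]; omega)]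
    exact hB v

lemma IsShifted.mem_of_card_inter_range_le (h : IsShifted 𝒜) (hA : A ∈ 𝒜) (hcard : #B = #A)
    (hB : ∀ v, #(A ∩ range v) ≤ #(B ∩ range v)) : B ∈ 𝒜 := by
  induction hn : #(A \ B) using Nat.strong_induction_on generalizing A with
  | _ n ih =>
  rcases (A \ B).eq_empty_or_nonempty with hAB | hAB
  · rwa [← eq_of_subset_of_card_le (sdiff_eq_empty_iff_subset.1 hAB) hcard.le]
  have hBA : (B \ A).Nonempty := by
    rw [← card_pos, ← card_sdiff_comm hcard.symm]; exact card_pos.2 hAB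
  obtain ⟨a, haAB, haMin⟩ : ∃ a ∈ A \ B, ∀ x ∈ A \ B, a ≤ x :=
    ⟨_, min'_mem _ hAB, fun x hx ↦ min'_le _ x hx⟩
  obtain ⟨b, hbBA, hbMin⟩ : ∃ b ∈ B \ A, ∀ x ∈ B \ A, b ≤ x :=
    ⟨_, min'_mem _ hBA, fun x hx ↦ min'_le _ x hx⟩
  obtain ⟨haA, haB⟩ := mem_sdiff.1 haAB
  obtain ⟨hbB, hbA⟩ := mem_sdiff.1 hbBA
  have hAa : ∀ x ∈ A, x < a → x ∈ B := fun x hx hxa ↦ by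
    by_contra hxB; exact (haMin x (mem_sdiff.2 ⟨hx, hxB⟩)).not_gt hxa
  have hBb : ∀ x ∈ B, x < b → x ∈ A := fun x hx hxb ↦ by
    by_contra hxA; exact (hbMin x (mem_sdiff.2 ⟨hx, hxA⟩)).not_gt hxb
  have hba : b < a := by
    by_contra! hab
    have hlt : a < b := lt_of_le_of_ne hab fun h ↦ hbA (h ▸ haA)
    have hsub : B ∩ range (a + 1) ⊆ A ∩ range a := fun x hx ↦ by
      simp only [mem_inter, mem_range] at hx ⊢
      exact ⟨hBb x hx.1 (by omega), lt_of_le_of_ne (by omega) fun h ↦ haB (h ▸ hx.1)⟩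
    have hins : A ∩ range (a + 1) = insert a (A ∩ range a) := by
      rw [range_add_one, inter_insert_of_mem haA]
    have := hB (a + 1)
    rw [hins, card_insert_of_notMem (by simp)] at this
    exact absurd (card_le_card hsub) (by omega)
  have hA'B : insert b (A.erase a) \ B = (A \ B).erase a := by
    ext x; simp only [mem_sdiff, mem_insert, mem_erase]; grind
  refine ih _ ?_ (h.insert_erase_mem hba hA hbA haA) (hcard.trans (card_insert_erase hbA haA).symm)
    (card_inter_range_insert_erase_le hba haA hbA hbB hAa hB) rfl
  rw [← hn, hA'B]
  exact card_erase_lt_of_mem haAB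

lemma two_mul_card_inter_range_lt {i : ℕ} (h : ∀ j < i, #(A ∩ range (τ + 2 * j)) < τ + j)
    {v : ℕ} (hv : v < τ + 2 * i) : 2 * #(A ∩ range v) < v + τ := by
  by_cases hvτ : v < τ
  · have := card_inter_range_le A v
    omega
  obtain ⟨j, rfl | rfl⟩ : ∃ j, v = τ + 2 * j ∨ v = τ + 2 * j + 1 := ⟨(v - τ) / 2, by omega⟩
  · have := h j (by omega)
    omega
  · have := h j (by omega)
    have := card_inter_range_add_one_le A (τ + 2 * j)
    omega

lemma IsShifted.exists_le_card_inter_range (h : IsShifted 𝒜) (hint : IsTIntersecting τ 𝒜)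
    (hA : A ∈ 𝒜) : ∃ i, τ + i ≤ #(A ∩ range (τ + 2 * i)) := by
  by_contra! hsparse
  have hτ : 1 ≤ τ := by have := hsparse 0; omega
  have hsparse' (v : ℕ) : 2 * #(A ∩ range v) < v + τ :=
    two_mul_card_inter_range_lt (i := v + 1) (fun j _ ↦ hsparse j) (by omega)
  obtain ⟨N, hN⟩ := exists_nat_subset_range A
  have hτA : τ ≤ #A := by simpa using hint A hA A hA
  obtain ⟨p, -, hp⟩ := exists_card_inter_range_eq (N := N) (j := τ - 1)
    (by rw [inter_eq_left.2 hN]; omega)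
  obtain ⟨q, hq⟩ := exists_card_range_sdiff_eq (A := A) (#A - (τ - 1))
  -- the `τ - 1` smallest elements of `A` and the `#A - (τ - 1)` smallest elements outside `A`
  set B := A ∩ range p ∪ range q \ A
  have hdisj : Disjoint (A ∩ range p) (range q \ A) :=
    disjoint_left.2 fun x hx hx' ↦ (mem_sdiff.1 hx').2 (mem_inter.1 hx).1
  have hAB : A ∩ B = A ∩ range p := by
    ext x; simp only [B, mem_inter, mem_union, mem_sdiff]; tauto
  have hB : B ∈ 𝒜 := by
    refine h.mem_of_card_inter_range_le hA (by rw [card_union_of_disjoint hdisj]; omega) ?_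
    intro v
    rw [card_inter_range_union_sdiff_inter_range]
    have := card_range_sdiff_add_card_inter_range A v
    have := card_range_sdiff_add_card_inter_range A q
    have : #(A ∩ range v) ≤ #A := card_le_card inter_subset_left
    have := hsparse' v
    rcases le_total p v with hpv | hpv <;> rcases le_total q v with hqv | hqv <;>
      simp only [min_eq_left, min_eq_right, hpv, hqv] <;> omega
  have := hint A hA B hB
  rw [hAB, hp] at this
  omega

noncomputable def pivot (τ : ℕ) (A : Finset ℕ) : ℕ :=
  sInf {i | τ + i ≤ #(A ∩ range (τ + 2 * i))}

lemma pivot_le {i : ℕ} (h : τ + i ≤ #(A ∩ range (τ + 2 * i))) : pivot τ A ≤ i :=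
  Nat.sInf_le h

lemma le_card_inter_range_pivot (h : ∃ i, τ + i ≤ #(A ∩ range (τ + 2 * i))) :
    τ + pivot τ A ≤ #(A ∩ range (τ + 2 * pivot τ A)) :=
  Nat.sInf_mem h

lemma card_inter_range_lt_of_lt_pivot {j : ℕ} (hj : j < pivot τ A) :
    #(A ∩ range (τ + 2 * j)) < τ + j := by
  simpa using Nat.notMem_of_lt_sInf hj

lemma two_mul_card_inter_range_lt_of_lt_pivot {v : ℕ} (hv : v < τ + 2 * pivot τ A) :
    2 * #(A ∩ range v) < v + τ :=
  two_mul_card_inter_range_lt (fun _ ↦ card_inter_range_lt_of_lt_pivot) hv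

lemma card_inter_range_pivot (h : ∃ i, τ + i ≤ #(A ∩ range (τ + 2 * i))) :
    #(A ∩ range (τ + 2 * pivot τ A)) = τ + pivot τ A := by
  refine le_antisymm ?_ (le_card_inter_range_pivot h)
  rcases Nat.eq_zero_or_pos (pivot τ A) with h0 | hpos
  · simpa [h0] using card_inter_range_le A τ
  · have := card_inter_range_add_one_le A (τ + 2 * pivot τ A - 1)
    have := two_mul_card_inter_range_lt_of_lt_pivot (τ := τ) (A := A) (v := τ + 2 * pivot τ A - 1)
      (by omega)
    rw [show τ + 2 * pivot τ A - 1 + 1 = τ + 2 * pivot τ A by omega] at *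
    omega

lemma pivot_le_of_symmDiff_eq {A' : Finset ℕ} (hA : ∃ i, τ + i ≤ #(A ∩ range (τ + 2 * i)))
    (heq : A ∆ range (τ + 2 * pivot τ A) = A' ∆ range (τ + 2 * pivot τ A')) :
    pivot τ A' ≤ pivot τ A := by
  by_contra! hlt
  have hsame : range (τ + 2 * pivot τ A) \ A = range (τ + 2 * pivot τ A) \ A' := by
    rw [← symmDiff_range_inter_range A le_rfl, heq, symmDiff_range_inter_range A' (by omega)]
  have hcount : #(A ∩ range (τ + 2 * pivot τ A)) = #(A' ∩ range (τ + 2 * pivot τ A)) := by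
    have := card_range_sdiff_add_card_inter_range A (τ + 2 * pivot τ A)
    have := card_range_sdiff_add_card_inter_range A' (τ + 2 * pivot τ A)
    rw [hsame] at *
    omega
  exact hlt.not_ge (pivot_le (hcount ▸ le_card_inter_range_pivot hA))

lemma IsShifted.symmDiff_range_pivot_mem_shadow (h : IsShifted 𝒜) (hint : IsTIntersecting τ 𝒜)
    (hA : A ∈ 𝒜) : A ∆ range (τ + 2 * pivot τ A) ∈ ∂^[τ] 𝒜 := by
  set d := τ + 2 * pivot τ A
  have hd : #(A ∩ range d) = τ + pivot τ A :=
    card_inter_range_pivot (h.exists_le_card_inter_range hint hA)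
  obtain ⟨w, hwd, hw⟩ := exists_card_inter_range_eq (A := A) (N := d) (j := τ) (by omega)
  -- adding back the `τ` smallest elements of `A` gives a left shift `C` of `A`
  set C := A ∩ range w ∪ A ∆ range d
  have hdisj : Disjoint (A ∩ range w) (A ∆ range d) := disjoint_left.2 fun x hx hx' ↦ by
    simp only [mem_inter, mem_symmDiff, mem_range] at hx hx'
    grind
  have hCcard : #C = #(A ∆ range d) + τ := by
    rw [card_union_of_disjoint hdisj, hw, add_comm]
  have := card_symmDiff_add_two_mul_card_inter A (range d)
  rw [card_range] at this
  refine mem_shadow_iterate_iff_exists_mem_card_add.2 ⟨C, ?_, subset_union_right, hCcard⟩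
  refine h.mem_of_card_inter_range_le hA (by omega) fun v ↦ ?_
  by_cases hv : v < d
  · have hsub : A ∩ range w ∪ range d \ A ⊆ C :=
      union_subset_union_right (symmDiff_subset_sdiff' (s := A))
    refine le_trans ?_ (card_le_card (inter_subset_inter_right hsub))
    rw [card_inter_range_union_sdiff_inter_range, min_eq_right hv.le]
    have := card_range_sdiff_add_card_inter_range A v
    have := two_mul_card_inter_range_lt_of_lt_pivot hv
    rcases le_total w v with hwv | hwv
    · rw [min_eq_left hwv, hw]; omega
    · rw [min_eq_right hwv]; omega
  · have hout : C \ range v = A \ range v := by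
      ext x
      simp only [C, mem_sdiff, mem_union, mem_inter, mem_symmDiff, mem_range]
      grind
    have := card_sdiff_add_card_inter C (range v)
    have := card_sdiff_add_card_inter A (range v)
    rw [hout] at *
    omega

theorem IsShifted.card_le_card_shadow_iterate (h : IsShifted 𝒜) (hint : IsTIntersecting τ 𝒜) :
    #𝒜 ≤ #(∂^[τ] 𝒜) := by
  refine card_le_card_of_injOn (fun A ↦ A ∆ range (τ + 2 * pivot τ A))
    (fun A hA ↦ h.symmDiff_range_pivot_mem_shadow hint hA) fun A hA A' hA' heq ↦ ?_
  have hp : pivot τ A = pivot τ A' :=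
    le_antisymm (pivot_le_of_symmDiff_eq (h.exists_le_card_inter_range hint hA') heq.symm)
      (pivot_le_of_symmDiff_eq (h.exists_le_card_inter_range hint hA) heq)
  simp only at heq
  rwa [hp, symmDiff_left_inj] at heq

end Shifted

theorem IsTIntersecting.card_le_card_shadow_iterate {τ : ℕ} {𝒜 : Finset (Finset ℕ)}
    (h : IsTIntersecting τ 𝒜) : #𝒜 ≤ #(∂^[τ] 𝒜) := by
  by_cases hs : IsShifted 𝒜
  · exact hs.card_le_card_shadow_iterate h
  obtain ⟨a, b, hab, hne⟩ : ∃ a b, a < b ∧ 𝓒 {a} {b} 𝒜 ≠ 𝒜 := by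
    simpa [IsShifted, UV.IsCompressed] using hs
  have := UV.sum_sum_compression_lt hab hne
  calc #𝒜 = #(𝓒 {a} {b} 𝒜) := (UV.card_compression _ _ _).symm
    _ ≤ #(∂^[τ] (𝓒 {a} {b} 𝒜)) := h.uvCompression.card_le_card_shadow_iterate
    _ ≤ #(∂^[τ] 𝒜) := UV.card_shadow_iterate_compression_le _ _ _ _
termination_by ∑ A ∈ 𝒜, ∑ x ∈ A, x

section Complements

variable {α : Type*} [DecidableEq α] {U : Finset α} {ℱ : Finset (Finset α)} {r t : ℕ}

lemma card_image_sdiff (hℱ : ℱ ⊆ powersetCard r U) : #(ℱ.image (U \ ·)) = #ℱ :=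
  card_image_of_injOn fun X hX Y hY hXY ↦ by
    rw [← sdiff_sdiff_eq_self (mem_powersetCard.1 (hℱ hX)).1,
      ← sdiff_sdiff_eq_self (mem_powersetCard.1 (hℱ hY)).1]
    exact congrArg (U \ ·) hXY

lemma IsTIntersecting.image_sdiff (hℱ : ℱ ⊆ powersetCard r U) (h : IsTIntersecting t ℱ) :
    IsTIntersecting (#U - (2 * r - t)) (ℱ.image (U \ ·)) := by
  simp only [IsTIntersecting, mem_image]
  rintro _ ⟨X, hX, rfl⟩ _ ⟨Y, hY, rfl⟩
  obtain ⟨hXU, hXr⟩ := mem_powersetCard.1 (hℱ hX)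
  obtain ⟨hYU, hYr⟩ := mem_powersetCard.1 (hℱ hY)
  rw [← sdiff_union_distrib, card_sdiff_of_subset (union_subset hXU hYU)]
  have := card_union_add_card_inter X Y
  have := h X hX Y hY
  omega

lemma shadow_iterate_image_sdiff_subset (hℱ : ℱ ⊆ powersetCard r U) (j : ℕ) :
    ∂^[j] (ℱ.image (U \ ·)) ⊆ {B ∈ powersetCard (#U - r - j) U | ∃ X ∈ ℱ, Disjoint B X} := by
  have hsized : (ℱ.image (U \ ·) : Set (Finset α)).Sized (#U - r) := by
    simp only [Set.Sized, coe_image, Set.forall_mem_image, mem_coe]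
    intro X hX
    obtain ⟨hXU, hXr⟩ := mem_powersetCard.1 (hℱ hX)
    rw [card_sdiff_of_subset hXU, hXr]
  intro B hB
  obtain ⟨_, hA, hBA, -⟩ := mem_shadow_iterate_iff_exists_sdiff.1 hB
  obtain ⟨X, hX, rfl⟩ := mem_image.1 hA
  obtain ⟨hBU, hBX⟩ := subset_sdiff.1 hBA
  exact mem_filter.2 ⟨mem_powersetCard.2 ⟨hBU, hsized.shadow_iterate hB⟩, X, hX, hBX⟩

end Complements

end Finset

theorem frankl_t_intersecting_bound_general
    (t k n : ℕ) (hn : 2 * k + t ≤ n)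
    (F G : Finset (Finset ℕ))
    (hF : F ⊆ powersetCard (k + t) (Icc 1 n))
    (hG : G ⊆ powersetCard k (Icc 1 n))
    (hcross : ∀ A ∈ F, ∀ B ∈ G, (A ∩ B).Nonempty)
    (hint : ∀ A ∈ F, ∀ A' ∈ F, t ≤ (A ∩ A').card) :
    F.card + G.card ≤ Nat.choose n k := by
  set 𝒜 := F.image (Icc 1 n \ ·)
  have hτ : n - (2 * k + t) = #(Icc 1 n) - (2 * (k + t) - t) := by
    rw [Nat.card_Icc]; omega
  have h𝒜 : IsTIntersecting (n - (2 * k + t)) 𝒜 := hτ ▸ IsTIntersecting.image_sdiff hF hint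
  have hshadow :
      ∂^[n - (2 * k + t)] 𝒜 ⊆ {B ∈ powersetCard k (Icc 1 n) | ∃ X ∈ F, Disjoint B X} := by
    convert shadow_iterate_image_sdiff_subset hF _ using 4
    rw [Nat.card_Icc]; omega
  have hdisj : Disjoint G (∂^[n - (2 * k + t)] 𝒜) := disjoint_left.2 fun B hB hB' ↦ by
    obtain ⟨-, X, hX, hBX⟩ := mem_filter.1 (hshadow hB')
    exact (hcross X hX B hB).ne_empty (disjoint_iff_inter_eq_empty.1 hBX.symm)
  calc #F + #G = #𝒜 + #G := by rw [card_image_sdiff hF]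
    _ ≤ #(∂^[n - (2 * k + t)] 𝒜 ∪ G) := by
      rw [card_union_of_disjoint hdisj.symm]
      exact Nat.add_le_add_right h𝒜.card_le_card_shadow_iterate _
    _ ≤ #(powersetCard k (Icc 1 n)) :=
      card_le_card (union_subset (hshadow.trans (filter_subset _ _)) hG)
    _ = n.choose k := by simp

theorem frankl_t_intersecting_bound
    (t k n : ℕ) (hk : 1 ≤ k) (hn : 2 * k + t ≤ n)
    (F G : Finset (Finset ℕ))
    (hF : F ⊆ powersetCard (k + t) (Icc 1 n))
    (hG : G ⊆ powersetCard k (Icc 1 n))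
    (hcross : ∀ A ∈ F, ∀ B ∈ G, (A ∩ B).Nonempty)
    (hint : ∀ A ∈ F, ∀ A' ∈ F, t ≤ (A ∩ A').card) :
    F.card + G.card ≤ Nat.choose n k :=
  frankl_t_intersecting_bound_general t k n hn F G hF hG hcross hint
end
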